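/- arXiv:2311.02745 — 13 statements merged into one kernel-verified Lean document; each statement's English description precedes it below -/
import Mathlib

section
/- For the logit system with β = 0 and θ ∈ (0,1), the tragedy fixed point (1/2, 0) is globally attracting on the interior: for every continuously differentiable curve z = (x,n) : [0,∞) → [0,1]² satisfying ẋ(t) = 1/2 − x(t) and ṅ(t) = ε·n(t)·(1−n(t))·((1+θ)x(t) − 1) with x(0) ∈ (0,1) and n(0) ∈ (0,1), one has x(t) → 1/2 and n(t) → 0 as t → ∞. -/
set_option autoImplicit false

open Real Set Filter Topology

/-! The equation for `x` is linear, so `x → 1/2` and eventually `(1 + θ) x - 1 ≤ -(1 - θ)/4`.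
Writing `ṅ = n (1 - n) r`, a Grönwall comparison of `n - 1` with an exponential keeps `n` below
`1` (`r` is bounded above), and once `r ≤ -δ` the function `n` is nonincreasing, so
`ṅ ≤ -δ (1 - n(T)) n` and `n` decays exponentially. -/

theorem le_mul_exp_of_hasDerivAt_le_mul {y y' : ℝ → ℝ} {a K : ℝ}
    (hy : ∀ t ∈ Ici a, HasDerivAt y (y' t) t) (hle : ∀ t ∈ Ici a, y' t ≤ K * y t)
    {t : ℝ} (ht : a ≤ t) : y t ≤ y a * exp (K * (t - a)) := by
  set g : ℝ → ℝ := fun s => y s * exp (-K * (s - a))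
  have hg : ∀ s ∈ Ici a, HasDerivAt g ((y' s - K * y s) * exp (-K * (s - a))) s := by
    intro s hs
    have hlin : HasDerivAt (fun s => -K * (s - a)) (-K) s := by
      simpa using ((hasDerivAt_id s).sub_const a).const_mul (-K)
    exact ((hy s hs).mul hlin.exp).congr_deriv (by ring)
  have hanti : AntitoneOn g (Ici a) :=
    antitoneOn_of_hasDerivWithinAt_nonpos (convex_Ici a)
      (fun s hs => (hg s hs).continuousAt.continuousWithinAt)
      (fun s hs => (hg s (interior_subset hs)).hasDerivWithinAt)
      (fun s hs => mul_nonpos_of_nonpos_of_nonneg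
        (sub_nonpos.2 (hle s (interior_subset hs))) (exp_pos _).le)
  have hgt : g t ≤ y a := by simpa [g] using hanti self_mem_Ici ht ht
  calc y t = g t * exp (K * (t - a)) := by simp [g, mul_assoc, ← exp_add]
    _ ≤ y a * exp (K * (t - a)) := mul_le_mul_of_nonneg_right hgt (exp_pos _).le

theorem tendsto_mul_exp_mul_sub_nhds_zero {K : ℝ} (hK : K < 0) (C a : ℝ) :
    Tendsto (fun t => C * exp (K * (t - a))) atTop (𝓝 0) := by
  have hsub : Tendsto (fun t : ℝ => t - a) atTop atTop := by
    simpa [sub_eq_add_neg] using tendsto_atTop_add_const_right atTop (-a) tendsto_id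
  simpa using (tendsto_exp_atBot.comp (hsub.const_mul_atTop_of_neg hK)).const_mul C

theorem tendsto_of_hasDerivAt_sub_self {x : ℝ → ℝ} {a c : ℝ}
    (hx : ∀ t ∈ Ici a, HasDerivAt x (c - x t) t) : Tendsto x atTop (𝓝 c) := by
  have hup : ∀ t ∈ Ici a, x t - c ≤ (x a - c) * exp (-1 * (t - a)) := fun t ht =>
    le_mul_exp_of_hasDerivAt_le_mul (fun s hs => (hx s hs).sub_const c)
      (fun s _ => by linarith) ht
  have hlow : ∀ t ∈ Ici a, c - x t ≤ (c - x a) * exp (-1 * (t - a)) := fun t ht =>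
    le_mul_exp_of_hasDerivAt_le_mul (fun s hs => (hx s hs).const_sub c)
      (fun s _ => by linarith) ht
  have hlim : ∀ C, Tendsto (fun t => c + C * exp (-1 * (t - a))) atTop (𝓝 c) := fun C => by
    simpa using (tendsto_mul_exp_mul_sub_nhds_zero (K := -1) (by norm_num) C a).const_add c
  refine tendsto_of_tendsto_of_tendsto_of_le_of_le' (hlim (x a - c)) (hlim (x a - c)) ?_ ?_
  · filter_upwards [eventually_ge_atTop a] with t ht
    linarith [hlow t ht]
  · filter_upwards [eventually_ge_atTop a] with t ht
    linarith [hup t ht]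

section Logistic

variable {n r : ℝ → ℝ} {a : ℝ}

theorem logistic_lt_one (hn : ∀ t ∈ Ici a, HasDerivAt n (n t * (1 - n t) * r t) t)
    (hrange : ∀ t ∈ Ici a, n t ∈ Icc (0 : ℝ) 1) {K : ℝ} (hK : 0 ≤ K)
    (hr : ∀ t ∈ Ici a, r t ≤ K) (ha : n a < 1) {t : ℝ} (ht : a ≤ t) : n t < 1 := by
  have h := le_mul_exp_of_hasDerivAt_le_mul (y := fun s => n s - 1) (K := -K)
    (fun s hs => (hn s hs).sub_const 1) (fun s hs => by
      obtain ⟨h0, h1⟩ := hrange s hs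
      have := hr s hs
      nlinarith [mul_nonneg h0 (sub_nonneg.2 h1), mul_nonneg (sub_nonneg.2 h1) hK]) ht
  nlinarith [exp_pos (-K * (t - a))]

theorem logistic_tendsto_zero (hn : ∀ t ∈ Ici a, HasDerivAt n (n t * (1 - n t) * r t) t)
    (hrange : ∀ t ∈ Ici a, n t ∈ Icc (0 : ℝ) 1) {δ : ℝ} (hδ : 0 < δ)
    (hr : ∀ t ∈ Ici a, r t ≤ -δ) (ha : n a < 1) : Tendsto n atTop (𝓝 0) := by
  have hanti : ∀ t ∈ Ici a, n t ≤ n a := fun t ht => by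
    simpa using le_mul_exp_of_hasDerivAt_le_mul (K := 0) hn (fun s hs => by
      obtain ⟨h0, h1⟩ := hrange s hs
      have := hr s hs
      nlinarith [mul_nonneg h0 (sub_nonneg.2 h1)]) ht
  have hdecay : ∀ t ∈ Ici a, n t ≤ n a * exp (-(δ * (1 - n a)) * (t - a)) := fun t ht =>
    le_mul_exp_of_hasDerivAt_le_mul hn (fun s hs => by
      obtain ⟨h0, h1⟩ := hrange s hs
      have := hr s hs
      have := hanti s hs
      nlinarith [mul_nonneg h0 (sub_nonneg.2 h1), mul_nonneg h0 (sub_nonneg.2 this)]) ht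
  refine tendsto_of_tendsto_of_tendsto_of_le_of_le' tendsto_const_nhds
    (tendsto_mul_exp_mul_sub_nhds_zero (neg_neg_of_pos (mul_pos hδ (sub_pos.2 ha))) (n a) a) ?_ ?_
  · filter_upwards [eventually_ge_atTop a] with t ht
    exact (hrange t ht).1
  · filter_upwards [eventually_ge_atTop a] with t ht
    exact hdecay t ht

end Logistic

theorem logit_beta_zero_globally_attracting_general
    (θ ε : ℝ) (hθ : θ ∈ Ioo (0:ℝ) 1) (hε : 0 < ε)
    (x n : ℝ → ℝ)
    (hrange : ∀ t ∈ Ici (0:ℝ), x t ∈ Icc (0:ℝ) 1 ∧ n t ∈ Icc (0:ℝ) 1)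
    (hdx : ∀ t ∈ Ici (0:ℝ), HasDerivAt x (1/2 - x t) t)
    (hdn : ∀ t ∈ Ici (0:ℝ),
      HasDerivAt n (ε * n t * (1 - n t) * ((1 + θ) * x t - 1)) t)
    (hn0 : n 0 ∈ Ioo (0:ℝ) 1) :
    Tendsto x atTop (nhds (1/2)) ∧ Tendsto n atTop (nhds 0) := by
  obtain ⟨hθ0, hθ1⟩ := hθ
  have hx : Tendsto x atTop (𝓝 (1/2)) := tendsto_of_hasDerivAt_sub_self hdx
  set r : ℝ → ℝ := fun t => ε * ((1 + θ) * x t - 1)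
  have hdn' : ∀ t ∈ Ici 0, HasDerivAt n (n t * (1 - n t) * r t) t :=
    fun t ht => (hdn t ht).congr_deriv (by ring)
  have hr_le : ∀ t ∈ Ici 0, r t ≤ ε := fun t ht => by
    have hc : (1 + θ) * x t - 1 ≤ 1 := by nlinarith [(hrange t ht).1.2]
    simpa using mul_le_mul_of_nonneg_left hc hε.le
  have hr_lim : Tendsto r atTop (𝓝 (ε * ((1 + θ) * (1/2) - 1))) :=
    ((hx.const_mul (1 + θ)).sub_const 1).const_mul ε
  obtain ⟨T, hT⟩ := eventually_atTop.1
    (hr_lim.eventually (gt_mem_nhds (show _ < -(ε * (1 - θ) / 4) by nlinarith)))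
  set a := max T 0
  have hsub : Ici a ⊆ Ici 0 := Ici_subset_Ici.2 (le_max_right T 0)
  have hna : n a < 1 := logistic_lt_one hdn' (fun t ht => (hrange t ht).2) hε.le hr_le hn0.2
    (le_max_right T 0)
  refine ⟨hx, logistic_tendsto_zero (a := a) (fun t ht => hdn' t (hsub ht))
    (fun t ht => (hrange t (hsub ht)).2) (by nlinarith : 0 < ε * (1 - θ) / 4)
    (fun t ht => (hT t (le_trans (le_max_left T 0) ht)).le) hna⟩

/-- For the logit system with β = 0 and θ ∈ (0,1), the tragedy
fixed point (1/2, 0) is globally attracting on the interior: every C¹ solution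
curve in [0,1]² starting in the open square converges to (1/2, 0). -/
theorem logit_beta_zero_globally_attracting
    (θ ε : ℝ) (hθ : θ ∈ Ioo (0:ℝ) 1) (hε : 0 < ε)
    (x n : ℝ → ℝ)
    (hx_smooth : ContDiffOn ℝ 1 x (Ici (0:ℝ)))
    (hn_smooth : ContDiffOn ℝ 1 n (Ici (0:ℝ)))
    (hrange : ∀ t ∈ Ici (0:ℝ), x t ∈ Icc (0:ℝ) 1 ∧ n t ∈ Icc (0:ℝ) 1)
    (hdx : ∀ t ∈ Ici (0:ℝ), HasDerivAt x (1/2 - x t) t)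
    (hdn : ∀ t ∈ Ici (0:ℝ),
      HasDerivAt n (ε * n t * (1 - n t) * ((1 + θ) * x t - 1)) t)
    (hx0 : x 0 ∈ Ioo (0:ℝ) 1) (hn0 : n 0 ∈ Ioo (0:ℝ) 1) :
    Tendsto x atTop (nhds (1/2)) ∧ Tendsto n atTop (nhds 0) :=
  logit_beta_zero_globally_attracting_general θ ε hθ hε x n hrange hdx hdn hn0
end

section
/- Suppose β > β_int := (1+θ)·log(1/θ) / (δ_RT0 + θ·δ_SP0). Then n_int := (δ_RT0 + θ·δ_SP0 − β^{-1}(1+θ)·log(1/θ)) / D lies in (0,1), and the point (x_int, n_int) with x_int := 1/(1+θ) is a fixed point of the logit system lying in the open square (0,1)². -/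
set_option autoImplicit false

open Real Set

/-!
At `x = 1/(1+θ)` the population equation `ṅ = 0` holds for every `n`, and the payoff `g` is affine
in `n` with value `(S - D n)/(1+θ)`, where `S = δ_RT0 + θ δ_SP0`. The logit equation at that `x`
asks for `β g = log (1/θ)`, which `n_int` solves. The condition `β > β_int` is exactly
`β⁻¹ (1+θ) log (1/θ) < S`, so the numerator of `n_int` is positive, and it is smaller than
`S < D`.
-/

lemma div_mem_Ioo_of_pos_of_lt {p q : ℝ} (hp : 0 < p) (hpq : p < q) : p / q ∈ Ioo (0 : ℝ) 1 :=
  ⟨div_pos hp (hp.trans hpq), (div_lt_one (hp.trans hpq)).2 hpq⟩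

lemma exp_log_one_div_div_one_add_exp {θ : ℝ} (hθ : 0 < θ) :
    exp (log (1 / θ)) / (1 + exp (log (1 / θ))) = 1 / (1 + θ) := by
  rw [exp_log (by positivity)]
  field_simp
  ring

lemma payoff_at_one_div_one_add (δTR1 δPS1 δRT0 δSP0 θ n : ℝ) (hθ : 1 + θ ≠ 0) :
    (δSP0 - δRT0 + δPS1 - δTR1) * (1 / (1 + θ)) * n + (δRT0 - δSP0) * (1 / (1 + θ))
        + -(δPS1 + δSP0) * n + δSP0
      = (δRT0 + θ * δSP0 - (δRT0 + θ * δSP0 + δTR1 + θ * δPS1) * n) / (1 + θ) := by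
  field_simp
  ring

lemma pos_and_inv_mul_lt_of_div_lt {K S β : ℝ} (hK : 0 < K) (hS : 0 < S) (h : K / S < β) :
    0 < β ∧ β⁻¹ * K < S := by
  have hβ : 0 < β := (div_pos hK hS).trans h
  refine ⟨hβ, ?_⟩
  rw [inv_mul_lt_iff₀ hβ, ← div_lt_iff₀ hS]
  exact h

theorem logit_interior_fixed_point_exists_general
    (δTR1 δPS1 δRT0 δSP0 θ ε : ℝ)
    (hTR1 : 0 < δTR1) (hPS1 : 0 < δPS1) (hSP0 : δSP0 < 0) (hRT0 : -δSP0 < δRT0)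
    (hθ : θ ∈ Ioo (0:ℝ) 1)
    (a b c d D : ℝ)
    (ha : a = δSP0 - δRT0 + δPS1 - δTR1) (hb : b = δRT0 - δSP0)
    (hc : c = -(δPS1 + δSP0)) (hd : d = δSP0)
    (hD : D = δRT0 + θ * δSP0 + δTR1 + θ * δPS1)
    (g : ℝ → ℝ → ℝ) (hg : ∀ x n, g x n = a * x * n + b * x + c * n + d)
    (β βint : ℝ)
    (F1 F2 : ℝ → ℝ → ℝ)
    (hF1 : ∀ x n, F1 x n = exp (β * g x n) / (1 + exp (β * g x n)) - x)
    (hF2 : ∀ x n, F2 x n = ε * n * (1 - n) * ((1 + θ) * x - 1))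
    (hβint : βint = (1 + θ) * Real.log (1/θ) / (δRT0 + θ * δSP0))
    (hβ : βint < β)
    (xint nint : ℝ)
    (hxint : xint = 1 / (1 + θ))
    (hnint : nint = (δRT0 + θ * δSP0 - β⁻¹ * (1 + θ) * Real.log (1/θ)) / D) :
    nint ∈ Ioo (0:ℝ) 1 ∧ (xint, nint) ∈ Ioo (0:ℝ) 1 ×ˢ Ioo (0:ℝ) 1 ∧
      F1 xint nint = 0 ∧ F2 xint nint = 0 := by
  obtain ⟨hθ0, hθ1⟩ := hθ
  have hθ' : (0 : ℝ) < 1 + θ := by linarith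
  have hS : 0 < δRT0 + θ * δSP0 := by nlinarith
  have hK : 0 < (1 + θ) * log (1 / θ) := mul_pos hθ' (log_pos (one_lt_one_div hθ0 hθ1))
  obtain ⟨hβ0, hr⟩ := pos_and_inv_mul_lt_of_div_lt hK hS (hβint ▸ hβ)
  have hDS : δRT0 + θ * δSP0 < D := by rw [hD]; nlinarith
  have hn : nint ∈ Ioo (0 : ℝ) 1 := by
    rw [hnint]
    refine div_mem_Ioo_of_pos_of_lt (by linarith) ?_
    linarith [mul_pos (inv_pos.2 hβ0) hK]
  have hx : xint ∈ Ioo (0 : ℝ) 1 := hxint ▸ div_mem_Ioo_of_pos_of_lt one_pos (by linarith)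
  have hβg : β * g xint nint = log (1 / θ) := by
    rw [hg, ha, hb, hc, hd, hxint, payoff_at_one_div_one_add _ _ _ _ _ _ hθ'.ne', ← hD, hnint,
      mul_div_cancel₀ _ (hS.trans hDS).ne']
    field_simp
    ring
  refine ⟨hn, ⟨hx, hn⟩, ?_, ?_⟩
  · rw [hF1, hβg, exp_log_one_div_div_one_add_exp hθ0, hxint, sub_self]
  · rw [hF2, hxint, mul_one_div_cancel hθ'.ne', sub_self, mul_zero]

/-- If β > β_int, then n_int ∈ (0,1) and (x_int, n_int) with
x_int = 1/(1+θ) is a fixed point of the logit system lying in (0,1)². -/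
theorem logit_interior_fixed_point_exists
    (δTR1 δPS1 δRT0 δSP0 θ ε : ℝ)
    (hTR1 : 0 < δTR1) (hPS1 : 0 < δPS1) (hSP0 : δSP0 < 0) (hRT0 : -δSP0 < δRT0)
    (hθ : θ ∈ Ioo (0:ℝ) 1) (hε : 0 < ε)
    (a b c d D : ℝ)
    (ha : a = δSP0 - δRT0 + δPS1 - δTR1) (hb : b = δRT0 - δSP0)
    (hc : c = -(δPS1 + δSP0)) (hd : d = δSP0)
    (hD : D = δRT0 + θ * δSP0 + δTR1 + θ * δPS1)
    (g : ℝ → ℝ → ℝ) (hg : ∀ x n, g x n = a * x * n + b * x + c * n + d)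
    (β βint : ℝ)
    (F1 F2 : ℝ → ℝ → ℝ)
    (hF1 : ∀ x n, F1 x n = exp (β * g x n) / (1 + exp (β * g x n)) - x)
    (hF2 : ∀ x n, F2 x n = ε * n * (1 - n) * ((1 + θ) * x - 1))
    (hβint : βint = (1 + θ) * Real.log (1/θ) / (δRT0 + θ * δSP0))
    (hβ : βint < β)
    (xint nint : ℝ)
    (hxint : xint = 1 / (1 + θ))
    (hnint : nint = (δRT0 + θ * δSP0 - β⁻¹ * (1 + θ) * Real.log (1/θ)) / D) :
    nint ∈ Ioo (0:ℝ) 1 ∧ (xint, nint) ∈ Ioo (0:ℝ) 1 ×ˢ Ioo (0:ℝ) 1 ∧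
      F1 xint nint = 0 ∧ F2 xint nint = 0 :=
  logit_interior_fixed_point_exists_general δTR1 δPS1 δRT0 δSP0 θ ε hTR1 hPS1 hSP0 hRT0 hθ a b c d D
    ha hb hc hd hD g hg β βint F1 F2 hF1 hF2 hβint hβ xint nint hxint hnint
end

section
/- Let β > 0 and suppose (x, n) ∈ (0,1)² is a fixed point of the logit system. Then necessarily β > β_int := (1+θ)·log(1/θ) / (δ_RT0 + θ·δ_SP0), x = 1/(1+θ), and n = (δ_RT0 + θ·δ_SP0 − β^{-1}(1+θ)·log(1/θ)) / D. In particular, for 0 < β ≤ β_int the logit system has no fixed points in the open square (0,1)². -/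
/-!
The replicator equation `ṅ = 0` with `n` strictly inside `(0,1)` forces the balanced share
`x = 1/(1+θ)`. The logit equation then says `σ(β g) = 1/(1+θ) = σ(log (1/θ))`, so by injectivity
of the sigmoid `β g = log (1/θ)`. At the balanced share `(1+θ) g` is affine in `n`, namely
`δRT0 + θ δSP0 - D n`, which yields `n`; and `D n > 0` is exactly the inequality `βint < β`.
-/

set_option autoImplicit false

open Real Set

theorem Real.exp_div_one_add_exp (y : ℝ) : exp y / (1 + exp y) = sigmoid y := by
  rw [sigmoid_def, exp_neg]
  field_simp
  ring

theorem Real.sigmoid_log_one_div {θ : ℝ} (hθ : 0 < θ) : sigmoid (log (1 / θ)) = 1 / (1 + θ) := by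
  rw [sigmoid_def, exp_neg, exp_log (one_div_pos.mpr hθ)]
  simp

theorem eq_one_div_of_replicator_eq_zero {ε n θ x : ℝ} (hε : ε ≠ 0) (hn : n ∈ Ioo (0 : ℝ) 1)
    (h : ε * n * (1 - n) * ((1 + θ) * x - 1) = 0) : x = 1 / (1 + θ) := by
  have hfactor : ε * n * (1 - n) ≠ 0 := by
    have := hn.1.ne'
    have := (sub_pos.mpr hn.2).ne'
    positivity
  exact eq_one_div_of_mul_eq_one_right (sub_eq_zero.mp ((mul_eq_zero.mp h).resolve_left hfactor))

theorem payoff_gap_at_balanced_share (δTR1 δPS1 δRT0 δSP0 θ n : ℝ) (hθ : 1 + θ ≠ 0) :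
    (1 + θ) * ((δSP0 - δRT0 + δPS1 - δTR1) * (1 / (1 + θ)) * n + (δRT0 - δSP0) * (1 / (1 + θ))
      + -(δPS1 + δSP0) * n + δSP0)
      = δRT0 + θ * δSP0 - (δRT0 + θ * δSP0 + δTR1 + θ * δPS1) * n := by
  field_simp
  ring

theorem lt_and_eq_div_of_eq_mul_sub {β L K D n : ℝ} (hβ : 0 < β) (hK : 0 < K) (hD : 0 < D)
    (hn : 0 < n) (h : L = β * (K - D * n)) :
    L / K < β ∧ n = (K - β⁻¹ * L) / D := by
  constructor
  · rw [div_lt_iff₀ hK, h]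
    nlinarith [mul_pos hβ (mul_pos hD hn)]
  · rw [eq_div_iff hD.ne', h, ← mul_assoc, inv_mul_cancel₀ hβ.ne']
    ring

theorem logit_interior_fixed_point_necessary_general
    (δTR1 δPS1 δRT0 δSP0 θ ε : ℝ)
    (hTR1 : 0 < δTR1) (hPS1 : 0 < δPS1) (hSP0 : δSP0 < 0) (hRT0 : -δSP0 < δRT0)
    (hθ : θ ∈ Ioo (0:ℝ) 1) (hε : 0 < ε)
    (a b c d D : ℝ)
    (ha : a = δSP0 - δRT0 + δPS1 - δTR1) (hb : b = δRT0 - δSP0)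
    (hc : c = -(δPS1 + δSP0)) (hd : d = δSP0)
    (hD : D = δRT0 + θ * δSP0 + δTR1 + θ * δPS1)
    (g : ℝ → ℝ → ℝ) (hg : ∀ x n, g x n = a * x * n + b * x + c * n + d)
    (β βint : ℝ) (hβpos : 0 < β)
    (F1 F2 : ℝ → ℝ → ℝ)
    (hF1 : ∀ x n, F1 x n = exp (β * g x n) / (1 + exp (β * g x n)) - x)
    (hF2 : ∀ x n, F2 x n = ε * n * (1 - n) * ((1 + θ) * x - 1))
    (hβint : βint = (1 + θ) * Real.log (1/θ) / (δRT0 + θ * δSP0))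
    (x n : ℝ) (hn : n ∈ Ioo (0:ℝ) 1)
    (hfix1 : F1 x n = 0) (hfix2 : F2 x n = 0) :
    βint < β ∧ x = 1 / (1 + θ) ∧
      n = (δRT0 + θ * δSP0 - β⁻¹ * (1 + θ) * Real.log (1/θ)) / D := by
  obtain ⟨hθ0, hθ1⟩ := hθ
  have hx : x = 1 / (1 + θ) := eq_one_div_of_replicator_eq_zero hε.ne' hn (hF2 x n ▸ hfix2)
  have hlogit : β * g x n = log (1 / θ) := by
    apply sigmoid_injective
    rw [sigmoid_log_one_div hθ0, ← exp_div_one_add_exp, ← hx]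
    exact sub_eq_zero.mp (hF1 x n ▸ hfix1)
  have hgap : (1 + θ) * g x n = δRT0 + θ * δSP0 - D * n := by
    rw [hg, hx, ha, hb, hc, hd, hD]
    exact payoff_gap_at_balanced_share _ _ _ _ _ _ (by linarith)
  have hK : 0 < δRT0 + θ * δSP0 := by nlinarith
  have hDpos : 0 < D := by rw [hD]; nlinarith
  obtain ⟨hβ, hn_eq⟩ := lt_and_eq_div_of_eq_mul_sub hβpos hK hDpos hn.1
    (L := (1 + θ) * log (1 / θ)) (by rw [← hgap, ← hlogit]; ring)
  exact ⟨hβint ▸ hβ, hx, by rw [hn_eq, mul_assoc]⟩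

/-- Let β > 0 and suppose (x,n) ∈ (0,1)² is a fixed point of the
logit system. Then necessarily β > β_int, x = 1/(1+θ), and
n = (δ_RT0 + θδ_SP0 − β⁻¹(1+θ)log(1/θ))/D. In particular, for 0 < β ≤ β_int
there are no interior fixed points. -/
theorem logit_interior_fixed_point_necessary
    (δTR1 δPS1 δRT0 δSP0 θ ε : ℝ)
    (hTR1 : 0 < δTR1) (hPS1 : 0 < δPS1) (hSP0 : δSP0 < 0) (hRT0 : -δSP0 < δRT0)
    (hθ : θ ∈ Ioo (0:ℝ) 1) (hε : 0 < ε)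
    (a b c d D : ℝ)
    (ha : a = δSP0 - δRT0 + δPS1 - δTR1) (hb : b = δRT0 - δSP0)
    (hc : c = -(δPS1 + δSP0)) (hd : d = δSP0)
    (hD : D = δRT0 + θ * δSP0 + δTR1 + θ * δPS1)
    (g : ℝ → ℝ → ℝ) (hg : ∀ x n, g x n = a * x * n + b * x + c * n + d)
    (β βint : ℝ) (hβpos : 0 < β)
    (F1 F2 : ℝ → ℝ → ℝ)
    (hF1 : ∀ x n, F1 x n = exp (β * g x n) / (1 + exp (β * g x n)) - x)
    (hF2 : ∀ x n, F2 x n = ε * n * (1 - n) * ((1 + θ) * x - 1))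
    (hβint : βint = (1 + θ) * Real.log (1/θ) / (δRT0 + θ * δSP0))
    (x n : ℝ) (hx : x ∈ Ioo (0:ℝ) 1) (hn : n ∈ Ioo (0:ℝ) 1)
    (hfix1 : F1 x n = 0) (hfix2 : F2 x n = 0) :
    βint < β ∧ x = 1 / (1 + θ) ∧
      n = (δRT0 + θ * δSP0 - β⁻¹ * (1 + θ) * Real.log (1/θ)) / D :=
  logit_interior_fixed_point_necessary_general δTR1 δPS1 δRT0 δSP0 θ ε hTR1 hPS1 hSP0 hRT0 hθ hε a b
    c d D ha hb hc hd hD g hg β βint hβpos F1 F2 hF1 hF2 hβint x n hn hfix1 hfix2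
end

section
/- For every β > 0, the equation b·x + d = T_β(x), where T_β(x) := β^{-1}·log(x/(1−x)), has exactly one solution x in the interval (1/2, 1). Equivalently, the logit system has exactly one tragedy-of-the-commons fixed point (x, 0) with x ∈ (1/2, 1). -/
/-!
Write `logit x = log (x / (1 - x))`, so the equation reads `β (b x + d) = logit x`. On `[1/2, 1)`
the logit is strictly convex (its derivative `1 / (x (1 - x))` increases there), vanishes at `1/2`
and takes the value `β b` at `sigmoid (β b) ∈ (1/2, 1)`. Hence `g x = β (b x + d) - logit x` is
strictly concave on `[1/2, 1)`, positive at `1/2` (because `b / 2 + d > 0`) and negative at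
`sigmoid (β b)` (because `d < 0`). The intermediate value theorem gives a zero of `g` in `(1/2, 1)`,
and a second one is impossible: by strict concavity `g` would be positive at the smaller zero,
which lies strictly between `1/2` and the larger one.
-/

open Real Set

noncomputable def logit (x : ℝ) : ℝ := log (x / (1 - x))

lemma logit_sigmoid (t : ℝ) : logit (sigmoid t) = t := by
  have h : sigmoid t / (1 - sigmoid t) = exp t := by
    rw [← sigmoid_neg, ← sigmoid_mul_rexp_neg, div_mul_cancel_left₀ (sigmoid_pos t).ne',
      exp_neg, inv_inv]
  rw [logit, h, log_exp]

lemma logit_half : logit (1 / 2) = 0 := by norm_num [logit]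

lemma hasDerivAt_logit {x : ℝ} (hx₀ : 0 < x) (hx₁ : x < 1) :
    HasDerivAt logit (1 / (x * (1 - x))) x := by
  have h₁ : (1 : ℝ) - x ≠ 0 := by linarith
  have hdiv : HasDerivAt (fun y => y / (1 - y)) (1 / (1 - x) ^ 2) x := by
    refine ((hasDerivAt_id' x).div ((hasDerivAt_id' x).const_sub 1) h₁).congr_deriv ?_
    ring
  refine (hdiv.log (div_pos hx₀ (by linarith)).ne').congr_deriv ?_
  field_simp

lemma continuousOn_logit : ContinuousOn logit (Ioo 0 1) :=
  fun _ hx => (hasDerivAt_logit hx.1 hx.2).continuousAt.continuousWithinAt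

lemma strictConvexOn_logit : StrictConvexOn ℝ (Ico (1 / 2) 1) logit := by
  refine StrictMonoOn.strictConvexOn_of_deriv (convex_Ico _ _)
    (continuousOn_logit.mono fun x hx => ⟨by linarith [hx.1], hx.2⟩) ?_
  rw [interior_Ico]
  intro x hx y hy hxy
  rw [(hasDerivAt_logit (by linarith [hx.1]) hx.2).deriv,
    (hasDerivAt_logit (by linarith [hy.1]) hy.2).deriv]
  have hy' : 0 < y * (1 - y) := mul_pos (by linarith [hy.1]) (by linarith [hy.2])
  exact one_div_lt_one_div_of_lt hy' (by nlinarith [hx.1])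

lemma concaveOn_affine {s : Set ℝ} (hs : Convex ℝ s) (m c : ℝ) :
    ConcaveOn ℝ s fun x => m * x + c := by
  refine ⟨hs, fun x _ y _ a b _ _ hab => le_of_eq ?_⟩
  simp only [smul_eq_mul]
  linear_combination c * hab

lemma StrictConcaveOn.pos_of_mem_Ioo {s : Set ℝ} {f : ℝ → ℝ} (hf : StrictConcaveOn ℝ s f)
    {a u v : ℝ} (ha : a ∈ s) (hv : v ∈ s) (hfa : 0 ≤ f a) (hfv : 0 ≤ f v) (hu : u ∈ Ioo a v) :
    0 < f u :=
  (le_min hfa hfv).trans_lt <|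
    hf.lt_on_openSegment ha hv (hu.1.trans hu.2).ne (Ioo_subset_openSegment hu)

lemma StrictConcaveOn.existsUnique_zero_Ioo {a c x₀ : ℝ} {f : ℝ → ℝ}
    (hf : StrictConcaveOn ℝ (Ico a c) f) (hcont : ContinuousOn f (Ico a c)) (hfa : 0 < f a)
    (hx₀ : x₀ ∈ Ioo a c) (hfx₀ : f x₀ < 0) : ∃! x, x ∈ Ioo a c ∧ f x = 0 := by
  have ha : a ∈ Ico a c := ⟨le_rfl, hx₀.1.trans hx₀.2⟩
  obtain ⟨x, hx, hfx⟩ : (0 : ℝ) ∈ f '' Ioo a x₀ :=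
    intermediate_value_Ioo' hx₀.1.le (hcont.mono (Icc_subset_Ico_right hx₀.2)) ⟨hfx₀, hfa⟩
  have hxc : x ∈ Ioo a c := ⟨hx.1, hx.2.trans hx₀.2⟩
  refine ⟨x, ⟨hxc, hfx⟩, fun y ⟨hy, hfy⟩ => ?_⟩
  have hpos : ∀ {u v}, v ∈ Ioo a c → f v = 0 → u ∈ Ioo a v → 0 < f u := fun hv hfv hu =>
    hf.pos_of_mem_Ioo ha (Ioo_subset_Ico_self hv) hfa.le hfv.ge hu
  rcases lt_trichotomy y x with hyx | rfl | hxy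
  · exact absurd hfy (hpos hxc hfx ⟨hy.1, hyx⟩).ne'
  · rfl
  · exact absurd hfx (hpos hy hfy ⟨hx.1, hxy⟩).ne'

/-- For every β > 0, the equation b·x + d = T_β(x) has exactly one
solution x in (1/2, 1); i.e. there is exactly one TOC fixed point (x,0) with
x ∈ (1/2, 1). -/
theorem toc3_exists_unique
    (δRT0 δSP0 : ℝ) (hSP0 : δSP0 < 0) (hRT0 : -δSP0 < δRT0)
    (b d : ℝ) (hb : b = δRT0 - δSP0) (hd : d = δSP0)
    (T : ℝ → ℝ → ℝ) (hT : ∀ β x, T β x = β⁻¹ * Real.log (x / (1 - x))) :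
    ∀ β : ℝ, 0 < β →
      ∃! x : ℝ, x ∈ Ioo (1/2 : ℝ) 1 ∧ b * x + d = T β x := by
  intro β hβ
  have hd0 : d < 0 := hd ▸ hSP0
  have hhalf : 0 < b / 2 + d := by rw [hb, hd]; linarith
  have hβb : 0 < β * b := mul_pos hβ (by linarith)
  set g : ℝ → ℝ := (fun x => β * b * x + β * d) - logit with hg_def
  have hg : ∀ x, b * x + d = T β x ↔ g x = 0 := fun x => by
    rw [hT, ← logit, eq_inv_mul_iff_mul_eq₀ hβ.ne', hg_def, Pi.sub_apply, sub_eq_zero,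
      mul_add, mul_assoc]
  have hg_concave : StrictConcaveOn ℝ (Ico (1 / 2) 1) g :=
    (concaveOn_affine (convex_Ico _ _) _ _).sub_strictConvexOn strictConvexOn_logit
  have hg_cont : ContinuousOn g (Ico (1 / 2) 1) :=
    (continuous_const.mul continuous_id |>.add continuous_const).continuousOn.sub
      (continuousOn_logit.mono fun x hx => ⟨by linarith [hx.1], hx.2⟩)
  have hg_half : 0 < g (1 / 2) := by
    simp only [hg_def, Pi.sub_apply, logit_half]
    linarith [mul_pos hβ hhalf]
  have hσ : sigmoid (β * b) ∈ Ioo (1 / 2) 1 :=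
    ⟨by rw [one_div, ← sigmoid_zero]; exact sigmoid_lt hβb, sigmoid_lt_one _⟩
  have hg_σ : g (sigmoid (β * b)) < 0 := by
    simp only [hg_def, Pi.sub_apply, logit_sigmoid]
    linarith [mul_lt_mul_of_pos_left hσ.2 hβb, mul_neg_of_pos_of_neg hβ hd0]
  simpa only [hg] using hg_concave.existsUnique_zero_Ioo hg_cont hg_half hσ hg_σ
end

section
/- Let x_toc3(β) denote the unique solution in (1/2, 1) of b·x + d = T_β(x). Then x_toc3 is strictly increasing in β for β > 0; moreover, with θ ∈ (0,1), δ_RT0 + θ·δ_SP0 > 0, and β_int := (1+θ)·log(1/θ)/(δ_RT0 + θ·δ_SP0), one has x_toc3(β_int) = 1/(1+θ), and hence x_toc3(β) ≥ 1/(1+θ) for all β ≥ β_int. -/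
/-! If `x₁` solves `b x + d = β₁⁻¹ log (x / (1 - x))` in `(1/2, 1)`, then `b x₁ + d > 0` because the
log-odds are positive there. Hence for `β₂ > β₁` the function `β₂ (b x + d) - log (x / (1 - x))` is
positive at `x₁`, and it tends to `-∞` as `x → 1⁻`; it vanishes somewhere in `(x₁, 1)`, and by
uniqueness that zero is the solution for `β₂`. At `β_int` the point `1 / (1 + θ)`, whose odds are
`1 / θ`, solves the equation by direct computation. -/

open Real Set Filter Topology

lemma tendsto_log_div_one_sub_nhdsLT_one :
    Tendsto (fun x : ℝ => log (x / (1 - x))) (𝓝[<] 1) atTop := by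
  have h_sub : Tendsto (fun x : ℝ => 1 - x) (𝓝[<] 1) (𝓝[>] 0) := by
    refine tendsto_nhdsWithin_of_tendsto_nhds_of_eventually_within _ ?_ ?_
    · exact ((continuous_sub_left 1).tendsto' 1 0 (sub_self 1)).mono_left nhdsWithin_le_nhds
    · filter_upwards [self_mem_nhdsWithin] with x hx using sub_pos.2 (mem_Iio.1 hx)
  have h_id : Tendsto (fun x : ℝ => x) (𝓝[<] 1) (𝓝 1) := tendsto_nhdsWithin_of_tendsto_nhds tendsto_id
  exact tendsto_log_atTop.comp (h_id.pos_mul_atTop one_pos (tendsto_inv_nhdsGT_zero.comp h_sub))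

lemma continuousOn_log_div_one_sub : ContinuousOn (fun x : ℝ => log (x / (1 - x))) (Ioo 0 1) := by
  refine ContinuousOn.log (continuousOn_id.div (by fun_prop) ?_) ?_ <;>
  · rintro x ⟨hx₀, hx₁⟩
    have : 0 < 1 - x := sub_pos.2 hx₁
    positivity

lemma log_div_one_sub_pos {x : ℝ} (hx : x ∈ Ioo (1 / 2) 1) : 0 < log (x / (1 - x)) := by
  have h₁ : 0 < 1 - x := sub_pos.2 hx.2
  exact log_pos ((one_lt_div h₁).2 (by linarith [hx.1]))

variable {b d : ℝ}

lemma exists_solution_gt {β₁ β₂ x₁ : ℝ} (hβ₁ : 0 < β₁) (hβ : β₁ < β₂) (hx₁ : x₁ ∈ Ioo (1 / 2) 1)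
    (hroot : b * x₁ + d = β₁⁻¹ * log (x₁ / (1 - x₁))) :
    ∃ y ∈ Ioo x₁ 1, b * y + d = β₂⁻¹ * log (y / (1 - y)) := by
  set g : ℝ → ℝ := fun y => β₂ * (b * y + d) - log (y / (1 - y))
  have hg_x₁ : 0 < g x₁ := by
    rw [eq_inv_mul_iff_mul_eq₀ hβ₁.ne'] at hroot
    have hpos : 0 < b * x₁ + d := pos_of_mul_pos_right (hroot ▸ log_div_one_sub_pos hx₁) hβ₁.le
    simp only [g, ← hroot]
    nlinarith
  have hg_tendsto : Tendsto g (𝓝[<] 1) atBot := by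
    have hlin : Tendsto (fun y => β₂ * (b * y + d)) (𝓝[<] 1) (𝓝 (β₂ * (b * 1 + d))) :=
      (Continuous.tendsto (by fun_prop) 1).mono_left nhdsWithin_le_nhds
    exact (hlin.add_atBot (tendsto_neg_atTop_atBot.comp tendsto_log_div_one_sub_nhdsLT_one)).congr
      fun y => (sub_eq_add_neg _ _).symm
  obtain ⟨c, hg_c, hc⟩ :=
    ((hg_tendsto.eventually_lt_atBot 0).and (Ioo_mem_nhdsLT hx₁.2)).exists
  have hcont : ContinuousOn g (Icc x₁ c) :=
    (by fun_prop : Continuous fun y => β₂ * (b * y + d)).continuousOn.sub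
      (continuousOn_log_div_one_sub.mono fun y hy =>
        ⟨by linarith [hx₁.1, hy.1], hy.2.trans_lt hc.2⟩)
  obtain ⟨y, hy, hgy⟩ := intermediate_value_Ioo' hc.1.le hcont ⟨hg_c, hg_x₁⟩
  refine ⟨y, ⟨hy.1, hy.2.trans hc.2⟩, ?_⟩
  rw [eq_inv_mul_iff_mul_eq₀ (hβ₁.trans hβ).ne']
  exact sub_eq_zero.1 hgy

lemma strictMonoOn_of_unique_solution (x : ℝ → ℝ)
    (hx : ∀ β : ℝ, 0 < β →
      x β ∈ Ioo (1 / 2 : ℝ) 1 ∧ b * x β + d = β⁻¹ * log (x β / (1 - x β)) ∧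
      ∀ y ∈ Ioo (1 / 2 : ℝ) 1, b * y + d = β⁻¹ * log (y / (1 - y)) → y = x β) :
    StrictMonoOn x (Ioi 0) := by
  intro β₁ hβ₁ β₂ hβ₂ hβ
  obtain ⟨hx₁, hroot₁, -⟩ := hx β₁ hβ₁
  obtain ⟨y, hy, hroot⟩ := exists_solution_gt hβ₁ hβ hx₁ hroot₁
  have hy_half : y ∈ Ioo (1 / 2 : ℝ) 1 := ⟨hx₁.1.trans hy.1, hy.2⟩
  exact (hx β₂ hβ₂).2.2 y hy_half hroot ▸ hy.1

lemma one_div_one_add_mem_Ioo {θ : ℝ} (hθ : θ ∈ Ioo (0 : ℝ) 1) :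
    1 / (1 + θ) ∈ Ioo (1 / 2 : ℝ) 1 := by
  obtain ⟨hθ₀, hθ₁⟩ := hθ
  constructor
  · rw [div_lt_div_iff₀ two_pos (by linarith)]; linarith
  · rw [div_lt_one (by linarith)]; linarith

lemma solution_at_one_div_one_add {δRT0 δSP0 θ : ℝ} (hθ : θ ∈ Ioo (0 : ℝ) 1) :
    (δRT0 - δSP0) * (1 / (1 + θ)) + δSP0 =
      ((1 + θ) * log (1 / θ) / (δRT0 + θ * δSP0))⁻¹ *
        log (1 / (1 + θ) / (1 - 1 / (1 + θ))) := by
  obtain ⟨hθ₀, hθ₁⟩ := hθ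
  have hlog : log (1 / θ) ≠ 0 := (log_pos ((one_lt_div hθ₀).2 hθ₁)).ne'
  have h_one_add : 1 + θ ≠ 0 := by positivity
  have hodds : 1 / (1 + θ) / (1 - 1 / (1 + θ)) = 1 / θ := by
    rw [one_sub_div h_one_add, div_div_div_cancel_right₀ h_one_add]
    ring
  rw [hodds, inv_div]
  field_simp
  ring

/-- The unique solution x_toc3(β) ∈ (1/2,1) of b·x + d = T_β(x) is
strictly increasing in β on (0,∞); moreover x_toc3(β_int) = 1/(1+θ), and hence
x_toc3(β) ≥ 1/(1+θ) for all β ≥ β_int. -/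
theorem toc3_monotone
    (δRT0 δSP0 θ : ℝ) (hSP0 : δSP0 < 0) (hRT0 : -δSP0 < δRT0)
    (hθ : θ ∈ Ioo (0:ℝ) 1)
    (b d βint : ℝ) (hb : b = δRT0 - δSP0) (hd : d = δSP0)
    (hβint : βint = (1 + θ) * Real.log (1/θ) / (δRT0 + θ * δSP0))
    (T : ℝ → ℝ → ℝ) (hT : ∀ β x, T β x = β⁻¹ * Real.log (x / (1 - x)))
    (xtoc3 : ℝ → ℝ)
    (hxtoc3 : ∀ β : ℝ, 0 < β →
      xtoc3 β ∈ Ioo (1/2 : ℝ) 1 ∧ b * xtoc3 β + d = T β (xtoc3 β) ∧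
      ∀ y ∈ Ioo (1/2 : ℝ) 1, b * y + d = T β y → y = xtoc3 β) :
    StrictMonoOn xtoc3 (Ioi (0:ℝ)) ∧ xtoc3 βint = 1 / (1 + θ) ∧
      ∀ β : ℝ, βint ≤ β → 1 / (1 + θ) ≤ xtoc3 β := by
  simp only [hT] at hxtoc3
  have hmono : StrictMonoOn xtoc3 (Ioi 0) := strictMonoOn_of_unique_solution xtoc3 hxtoc3
  have hδ : 0 < δRT0 + θ * δSP0 := by nlinarith [hθ.2]
  have hβint_pos : 0 < βint := by
    rw [hβint]
    have hlog : 0 < log (1 / θ) := log_pos ((one_lt_div hθ.1).2 hθ.2)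
    have hθ₀ : 0 < θ := hθ.1
    positivity
  have hvalue : xtoc3 βint = 1 / (1 + θ) := by
    refine ((hxtoc3 βint hβint_pos).2.2 _ (one_div_one_add_mem_Ioo hθ) ?_).symm
    rw [hb, hd, hβint]
    exact solution_at_one_div_one_add hθ
  refine ⟨hmono, hvalue, fun β hβ => hvalue ▸ ?_⟩
  exact hmono.monotoneOn hβint_pos (hβint_pos.trans_le hβ) hβ
end

section
/- Let x_toc3(β) denote the unique solution in (1/2, 1) of b·x + d = T_β(x). Then x_toc3(β) → 1 as β → ∞. -/
set_option autoImplicit false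

open Real Set Filter Topology

/-! Since the solution lies in `(1/2, 1)` and `b > 0`, the right-hand side `b·x + d` of the
fixed-point equation is at least `m := b/2 + d = (δ_RT0 + δ_SP0)/2 > 0`. Hence the log-odds
`log (x/(1-x)) = β (b·x + d)` are at least `β m`, which forces `1 - x ≤ exp (-β m) → 0`. -/

lemma one_sub_le_exp_neg_of_le_log_odds {x c : ℝ} (hx : x ∈ Ioo 0 1)
    (h : c ≤ log (x / (1 - x))) : 1 - x ≤ exp (-c) := by
  have h1x : 0 < 1 - x := sub_pos.2 hx.2
  have hodds : exp c ≤ x / (1 - x) := (le_log_iff_exp_le (div_pos hx.1 h1x)).1 h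
  rw [exp_neg, le_inv_comm₀ h1x (exp_pos c)]
  calc exp c ≤ x / (1 - x) := hodds
    _ ≤ 1 / (1 - x) := by gcongr; exact hx.2.le
    _ = (1 - x)⁻¹ := one_div _

lemma tendsto_one_of_one_sub_le_exp_neg {f : ℝ → ℝ} {m : ℝ} (hm : 0 < m)
    (h : ∀ᶠ β in atTop, 1 - exp (-(β * m)) ≤ f β ∧ f β ≤ 1) :
    Tendsto f atTop (𝓝 1) := by
  have hexp : Tendsto (fun β => exp (-(β * m))) atTop (𝓝 0) :=
    tendsto_exp_neg_atTop_nhds_zero.comp (tendsto_id.atTop_mul_const hm)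
  have hlower : Tendsto (fun β => 1 - exp (-(β * m))) atTop (𝓝 1) := by
    simpa using tendsto_const_nhds.sub hexp
  exact tendsto_of_tendsto_of_tendsto_of_le_of_le' hlower tendsto_const_nhds
    (h.mono fun _ hβ => hβ.1) (h.mono fun _ hβ => hβ.2)

/-- The unique solution x_toc3(β) ∈ (1/2,1) of b·x + d = T_β(x)
tends to 1 as β → ∞. -/
theorem toc3_limit
    (δRT0 δSP0 : ℝ) (hSP0 : δSP0 < 0) (hRT0 : -δSP0 < δRT0)
    (b d : ℝ) (hb : b = δRT0 - δSP0) (hd : d = δSP0)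
    (T : ℝ → ℝ → ℝ) (hT : ∀ β x, T β x = β⁻¹ * Real.log (x / (1 - x)))
    (xtoc3 : ℝ → ℝ)
    (hxtoc3 : ∀ β : ℝ, 0 < β →
      xtoc3 β ∈ Ioo (1/2 : ℝ) 1 ∧ b * xtoc3 β + d = T β (xtoc3 β) ∧
      ∀ y ∈ Ioo (1/2 : ℝ) 1, b * y + d = T β y → y = xtoc3 β) :
    Tendsto xtoc3 atTop (nhds 1) := by
  have hb0 : 0 < b := by linarith
  have hm : 0 < b / 2 + d := by linarith
  refine tendsto_one_of_one_sub_le_exp_neg hm ?_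
  filter_upwards [eventually_gt_atTop 0] with β hβ
  obtain ⟨⟨hx_gt, hx_lt⟩, hfix, -⟩ := hxtoc3 β hβ
  have hlog_odds : log (xtoc3 β / (1 - xtoc3 β)) = β * (b * xtoc3 β + d) := by
    rw [hfix, hT, ← mul_assoc, mul_inv_cancel₀ hβ.ne', one_mul]
  have hbound : β * (b / 2 + d) ≤ log (xtoc3 β / (1 - xtoc3 β)) := by
    rw [hlog_odds]
    gcongr
    nlinarith
  have hgap := one_sub_le_exp_neg_of_le_log_odds ⟨by linarith, hx_lt⟩ hbound
  constructor <;> linarith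
end

section
/- Concerning solutions of b·x + d = T_β(x) in the interval (0, 1/2): (i) if 0 < β ≤ 4/b, there are no solutions in (0, 1/2); (ii) for every β > 0, there are at most two solutions in (0, 1/2). -/
set_option autoImplicit false

open Real Set

/-!
Both parts rest on the strict concavity of `x ↦ log (x / (1 - x))` on `(0, 1/2]`, whose derivative
`1 / (x (1 - x))` decreases there. Multiplying the equation by `β`, the solutions are the points where
this function meets the line `y = β (b x + d)`, and a strictly concave graph meets a line at most
twice. For (i), the graph lies strictly below its tangent `y = 4 x - 2` at `1/2`; when `β b ≤ 4` and
`b + 2 d > 0` the line lies above that tangent on `(0, 1/2)`.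
-/

theorem Set.encard_le_two_of_forall_not_lt_lt {α : Type*} [LinearOrder α] {s : Set α}
    (h : ∀ p ∈ s, ∀ q ∈ s, ∀ r ∈ s, p < q → ¬ q < r) : s.encard ≤ 2 := by
  set lower := {x ∈ s | ∀ y ∈ s, x ≤ y}
  set upper := {x ∈ s | ∀ y ∈ s, y ≤ x}
  have hlower : lower.encard ≤ 1 :=
    encard_le_one_iff.2 fun x y hx hy => le_antisymm (hx.2 y hy.1) (hy.2 x hx.1)
  have hupper : upper.encard ≤ 1 :=
    encard_le_one_iff.2 fun x y hx hy => le_antisymm (hy.2 x hx.1) (hx.2 y hy.1)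
  have hcover : s ⊆ lower ∪ upper := by
    intro q hq
    by_contra hout
    simp only [lower, upper, mem_union, mem_ofPred_eq, hq, true_and, not_or, not_forall,
      not_le] at hout
    obtain ⟨⟨p, hp, hpq⟩, ⟨r, hr, hqr⟩⟩ := hout
    exact h p hp q hq r hr hpq hqr
  calc s.encard ≤ (lower ∪ upper).encard := encard_le_encard hcover
    _ ≤ lower.encard + upper.encard := encard_union_le _ _
    _ ≤ 1 + 1 := add_le_add hlower hupper
    _ = 2 := by norm_num

theorem StrictConcaveOn.encard_setOf_eq_affine_le_two {s : Set ℝ} {f : ℝ → ℝ}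
    (hf : StrictConcaveOn ℝ s f) (a c : ℝ) : {x | x ∈ s ∧ f x = a * x + c}.encard ≤ 2 := by
  refine Set.encard_le_two_of_forall_not_lt_lt ?_
  rintro p ⟨hp, hfp⟩ q ⟨-, hfq⟩ r ⟨hr, hfr⟩ hpq hqr
  have hq : q ∈ openSegment ℝ p r := by
    rw [openSegment_eq_Ioo (hpq.trans hqr)]
    exact ⟨hpq, hqr⟩
  obtain ⟨θ, μ, hθ, hμ, hθμ, rfl⟩ := hq
  have hlt := hf.2 hp hr (hpq.trans hqr).ne hθ hμ hθμ
  simp only [smul_eq_mul] at hlt hfq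
  rw [hfp, hfr, hfq] at hlt
  have hμ_eq : μ = 1 - θ := by linarith
  subst hμ_eq
  linarith

theorem hasDerivAt_log_div_one_sub {x : ℝ} (hx0 : 0 < x) (hx1 : x < 1) :
    HasDerivAt (fun y => log (y / (1 - y))) (x * (1 - x))⁻¹ x := by
  have hx1' : 1 - x ≠ 0 := by linarith
  have hdiv : HasDerivAt (fun y => y / (1 - y)) ((1 * (1 - x) - x * (-1)) / (1 - x) ^ 2) x :=
    (hasDerivAt_id x).div ((hasDerivAt_id x).const_sub 1) hx1'
  convert hdiv.log (div_ne_zero hx0.ne' hx1') using 1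
  field_simp
  ring

theorem strictAntiOn_inv_mul_one_sub : StrictAntiOn (fun x : ℝ => (x * (1 - x))⁻¹) (Ioo 0 (1 / 2)) :=
  fun x hx y hy hxy => inv_strictAnti₀ (by nlinarith [hx.1, hx.2]) (by nlinarith [hx.2, hy.2])

theorem strictConcaveOn_log_div_one_sub :
    StrictConcaveOn ℝ (Ioc 0 (1 / 2)) (fun x : ℝ => log (x / (1 - x))) := by
  refine StrictAntiOn.strictConcaveOn_of_deriv (convex_Ioc 0 (1 / 2)) ?_ ?_
  · exact fun x hx => (hasDerivAt_log_div_one_sub hx.1 (by linarith [hx.2])).continuousAt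
      |>.continuousWithinAt
  · rw [interior_Ioc]
    refine strictAntiOn_inv_mul_one_sub.congr fun x hx => ?_
    exact ((hasDerivAt_log_div_one_sub hx.1 (by linarith [hx.2])).deriv).symm

theorem log_div_one_sub_lt {x : ℝ} (hx0 : 0 < x) (hx : x < 1 / 2) :
    log (x / (1 - x)) < 4 * x - 2 := by
  have htangent := strictConcaveOn_log_div_one_sub.lt_slope_of_hasDerivAt ⟨hx0, hx.le⟩
    ⟨by norm_num, le_rfl⟩ hx (hasDerivAt_log_div_one_sub (by norm_num) (by norm_num))
  rw [slope_def_field, lt_div_iff₀ (by linarith)] at htangent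
  norm_num at htangent
  linarith

/-- Concerning solutions of b·x + d = T_β(x) in (0, 1/2):
(i) if 0 < β ≤ 4/b, there are no solutions in (0, 1/2);
(ii) for every β > 0, there are at most two solutions in (0, 1/2). -/
theorem toc_small_solutions
    (δRT0 δSP0 : ℝ) (hSP0 : δSP0 < 0) (hRT0 : -δSP0 < δRT0)
    (b d : ℝ) (hb : b = δRT0 - δSP0) (hd : d = δSP0)
    (T : ℝ → ℝ → ℝ) (hT : ∀ β x, T β x = β⁻¹ * Real.log (x / (1 - x))) :
    (∀ β : ℝ, 0 < β → β ≤ 4 / b →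
      ¬ ∃ x ∈ Ioo (0:ℝ) (1/2), b * x + d = T β x) ∧
    (∀ β : ℝ, 0 < β →
      {x : ℝ | x ∈ Ioo (0:ℝ) (1/2) ∧ b * x + d = T β x}.encard ≤ 2) := by
  have hb0 : 0 < b := by rw [hb]; linarith
  have hbd : 0 < b + 2 * d := by rw [hb, hd]; linarith
  have hline : ∀ β, 0 < β → ∀ x, b * x + d = T β x → log (x / (1 - x)) = β * b * x + β * d := by
    intro β hβ x hx
    rw [hT, eq_inv_mul_iff_mul_eq₀ hβ.ne'] at hx
    linarith
  refine ⟨?_, fun β hβ => ?_⟩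
  · rintro β hβ hβb ⟨x, ⟨hx0, hx⟩, hxT⟩
    have hβb' : β * b ≤ 4 := by rwa [le_div_iff₀ hb0] at hβb
    have hlt := log_div_one_sub_lt hx0 hx
    rw [hline β hβ x hxT] at hlt
    nlinarith [mul_pos hβ hbd, mul_nonneg (sub_nonneg.2 hβb') (sub_nonneg.2 hx.le)]
  · calc _ ≤ {x | x ∈ Ioo (0:ℝ) (1 / 2) ∧ log (x / (1 - x)) = β * b * x + β * d}.encard :=
          encard_le_encard fun x hx => ⟨hx.1, hline β hβ x hx.2⟩
      _ ≤ 2 := (strictConcaveOn_log_div_one_sub.subset Ioo_subset_Ioc_self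
          (convex_Ioo 0 (1 / 2))).encard_setOf_eq_affine_le_two _ _
end

section
/- Let β > 0 and let x_t ∈ (0,1) satisfy b·x_t + d = T_β(x_t), so that (x_t, 0) is a tragedy-of-the-commons fixed point. The Jacobian of the logit system at (x_t, 0) is the upper-triangular real 2×2 matrix J = [[β·b·x_t(1−x_t) − 1, β·(a·x_t + c)·x_t(1−x_t)], [0, ε·((1+θ)x_t − 1)]]. Both (complex) eigenvalues of J have negative real part if and only if x_t < 1/(1+θ) and β·b·x_t(1−x_t) < 1. -/
set_option autoImplicit false

open Real Set

/-!
On the boundary `n = 0` the factor `n (1 - n)` in `ṅ` kills every partial derivative of `ṅ`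
except the one in `n`, so the Jacobian is upper triangular and its eigenvalues are its diagonal
entries. The fixed-point equation says that `β g(x_t, 0)` is the log-odds of `x_t`, so the logistic
response equals `x_t` there and its slope `σ (1 - σ)` becomes `x_t (1 - x_t)`.
-/

namespace Real

lemma exp_div_one_add_exp_s12 (t : ℝ) : exp t / (1 + exp t) = sigmoid t := by
  rw [sigmoid_def, exp_neg]
  field_simp
  ring

lemma sigmoid_log_div_one_sub {x : ℝ} (hx : x ∈ Ioo (0 : ℝ) 1) :
    sigmoid (log (x / (1 - x))) = x := by
  have h1x : 0 < 1 - x := sub_pos.2 hx.2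
  rw [sigmoid_def, exp_neg, exp_log (div_pos hx.1 h1x), inv_div]
  field_simp [hx.1.ne']
  ring

end Real

namespace Matrix

variable {R : Type*} [CommRing R]

lemma isUpperTriangular_fin_two {M : Matrix (Fin 2) (Fin 2) R} (hM : M 1 0 = 0) :
    M.IsUpperTriangular := by
  intro i j hij
  fin_cases i <;> fin_cases j <;> simp_all

lemma isRoot_charpoly_iff_of_isUpperTriangular [IsDomain R] {n : Type*} [Fintype n]
    [DecidableEq n] [LinearOrder n] {M : Matrix n n R} (hM : M.IsUpperTriangular) (μ : R) :
    M.charpoly.IsRoot μ ↔ ∃ i, μ = M i i := by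
  simp only [Polynomial.IsRoot, charpoly_of_isUpperTriangular M hM, Polynomial.eval_prod,
    Polynomial.eval_sub, Polynomial.eval_X, Polynomial.eval_C, Finset.prod_eq_zero_iff,
    Finset.mem_univ, true_and, sub_eq_zero]

lemma IsUpperTriangular.forall_re_neg_iff {n : Type*} [Fintype n] [DecidableEq n]
    [LinearOrder n] {M : Matrix n n ℝ} (hM : M.IsUpperTriangular) :
    (∀ μ : ℂ, (M.map (algebraMap ℝ ℂ)).charpoly.IsRoot μ → μ.re < 0) ↔ ∀ i, M i i < 0 := by
  simp_rw [isRoot_charpoly_iff_of_isUpperTriangular (hM.map (algebraMap ℝ ℂ))]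
  simp

end Matrix

open ContinuousLinearMap

lemma hasFDerivAt_bilinear_affine (a b c d x₀ n₀ : ℝ) :
    HasFDerivAt (fun p : ℝ × ℝ => a * p.1 * p.2 + b * p.1 + c * p.2 + d)
      ((a * n₀ + b) • fst ℝ ℝ ℝ + (a * x₀ + c) • snd ℝ ℝ ℝ) (x₀, n₀) := by
  have hfst : HasFDerivAt (fun p : ℝ × ℝ => p.1) (fst ℝ ℝ ℝ) (x₀, n₀) := hasFDerivAt_fst
  have hsnd : HasFDerivAt (fun p : ℝ × ℝ => p.2) (snd ℝ ℝ ℝ) (x₀, n₀) := hasFDerivAt_snd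
  refine ((((hfst.const_mul a).mul hsnd).add (hfst.const_mul b)).add
    (hsnd.const_mul c)).add_const d |>.congr_fderiv ?_
  ext <;> simp; ring

lemma hasFDerivAt_replicator_of_snd_eq_zero (ε θ x₀ : ℝ) :
    HasFDerivAt (fun p : ℝ × ℝ => ε * p.2 * (1 - p.2) * ((1 + θ) * p.1 - 1))
      ((ε * ((1 + θ) * x₀ - 1)) • snd ℝ ℝ ℝ) (x₀, 0) := by
  have hfst : HasFDerivAt (fun p : ℝ × ℝ => p.1) (fst ℝ ℝ ℝ) (x₀, 0) := hasFDerivAt_fst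
  have hsnd : HasFDerivAt (fun p : ℝ × ℝ => p.2) (snd ℝ ℝ ℝ) (x₀, 0) := hasFDerivAt_snd
  refine (((hsnd.const_mul ε).mul (hsnd.const_sub 1)).mul
    ((hfst.const_mul (1 + θ)).sub_const 1)) |>.congr_fderiv ?_
  ext <;> simp; ring

theorem toc_jacobian_and_stability_general
    (θ ε : ℝ)
    (hθ : θ ∈ Ioo (0:ℝ) 1) (hε : 0 < ε)
    (a b c d : ℝ)
    (g : ℝ → ℝ → ℝ) (hg : ∀ x n, g x n = a * x * n + b * x + c * n + d)
    (β : ℝ) (hβ : 0 < β)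
    (T : ℝ → ℝ → ℝ) (hT : ∀ β' x, T β' x = β'⁻¹ * Real.log (x / (1 - x)))
    (F : ℝ × ℝ → ℝ × ℝ)
    (hF : ∀ p : ℝ × ℝ,
      F p = (exp (β * g p.1 p.2) / (1 + exp (β * g p.1 p.2)) - p.1,
             ε * p.2 * (1 - p.2) * ((1 + θ) * p.1 - 1)))
    (xt : ℝ) (hxt : xt ∈ Ioo (0:ℝ) 1) (hfix : b * xt + d = T β xt)
    (J : Matrix (Fin 2) (Fin 2) ℝ)
    (hJ : J = !![β * b * xt * (1 - xt) - 1, β * (a * xt + c) * (xt * (1 - xt));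
                 0, ε * ((1 + θ) * xt - 1)]) :
    HasFDerivAt F
      ((((β * b * xt * (1 - xt) - 1) • (ContinuousLinearMap.fst ℝ ℝ ℝ) +
         (β * (a * xt + c) * (xt * (1 - xt))) • (ContinuousLinearMap.snd ℝ ℝ ℝ))).prod
        ((ε * ((1 + θ) * xt - 1)) • (ContinuousLinearMap.snd ℝ ℝ ℝ)))
      (xt, 0) ∧
    ((∀ μ : ℂ, ((J.map (algebraMap ℝ ℂ)).charpoly).IsRoot μ → μ.re < 0) ↔
      (xt < 1 / (1 + θ) ∧ β * b * xt * (1 - xt) < 1)) := by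
  have hF' : F = fun p : ℝ × ℝ =>
      (sigmoid (β * (a * p.1 * p.2 + b * p.1 + c * p.2 + d)) - p.1,
        ε * p.2 * (1 - p.2) * ((1 + θ) * p.1 - 1)) := by
    funext p
    rw [hF, hg, exp_div_one_add_exp_s12]
  have hlog : β * (b * xt + d) = log (xt / (1 - xt)) := by
    rw [hfix, hT, ← mul_assoc, mul_inv_cancel₀ hβ.ne', one_mul]
  have hσ : sigmoid (β * (a * xt * 0 + b * xt + c * 0 + d)) = xt := by
    rw [show a * xt * 0 + b * xt + c * 0 + d = b * xt + d by ring, hlog,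
      sigmoid_log_div_one_sub hxt]
  have hlogit := ((hasDerivAt_sigmoid _).comp_hasFDerivAt (xt, (0 : ℝ))
    ((hasFDerivAt_bilinear_affine a b c d xt 0).const_mul β)).sub hasFDerivAt_fst
  rw [hσ] at hlogit
  have hJ10 : J 1 0 = 0 := by simp [hJ]
  constructor
  · rw [hF']
    refine (hlogit.prodMk (hasFDerivAt_replicator_of_snd_eq_zero ε θ xt)).congr_fderiv ?_
    ext <;> simp <;> ring
  rw [(Matrix.isUpperTriangular_fin_two hJ10).forall_re_neg_iff, Fin.forall_fin_two, hJ]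
  have hsign : ε * ((1 + θ) * xt - 1) < 0 ↔ xt < (1 + θ)⁻¹ := by
    rw [← one_div, lt_div_iff₀ (by linarith [hθ.1]), mul_comm xt]
    exact ⟨fun h => sub_neg.1 (neg_of_mul_neg_right h hε.le),
      fun h => mul_neg_of_pos_of_neg hε (sub_neg.2 h)⟩
  simp [hsign, and_comm]

/-- At a TOC fixed point (x_t, 0), the Jacobian of the logit
system is the upper-triangular matrix
J = [[β·b·x_t(1−x_t) − 1, β·(a·x_t + c)·x_t(1−x_t)], [0, ε·((1+θ)x_t − 1)]],
and both complex eigenvalues of J have negative real part if and only if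
x_t < 1/(1+θ) and β·b·x_t(1−x_t) < 1. -/
theorem toc_jacobian_and_stability
    (δTR1 δPS1 δRT0 δSP0 θ ε : ℝ)
    (hTR1 : 0 < δTR1) (hPS1 : 0 < δPS1) (hSP0 : δSP0 < 0) (hRT0 : -δSP0 < δRT0)
    (hθ : θ ∈ Ioo (0:ℝ) 1) (hε : 0 < ε)
    (a b c d : ℝ)
    (ha : a = δSP0 - δRT0 + δPS1 - δTR1) (hb : b = δRT0 - δSP0)
    (hc : c = -(δPS1 + δSP0)) (hd : d = δSP0)
    (g : ℝ → ℝ → ℝ) (hg : ∀ x n, g x n = a * x * n + b * x + c * n + d)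
    (β : ℝ) (hβ : 0 < β)
    (T : ℝ → ℝ → ℝ) (hT : ∀ β' x, T β' x = β'⁻¹ * Real.log (x / (1 - x)))
    (F : ℝ × ℝ → ℝ × ℝ)
    (hF : ∀ p : ℝ × ℝ,
      F p = (exp (β * g p.1 p.2) / (1 + exp (β * g p.1 p.2)) - p.1,
             ε * p.2 * (1 - p.2) * ((1 + θ) * p.1 - 1)))
    (xt : ℝ) (hxt : xt ∈ Ioo (0:ℝ) 1) (hfix : b * xt + d = T β xt)
    (J : Matrix (Fin 2) (Fin 2) ℝ)
    (hJ : J = !![β * b * xt * (1 - xt) - 1, β * (a * xt + c) * (xt * (1 - xt));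
                 0, ε * ((1 + θ) * xt - 1)]) :
    HasFDerivAt F
      ((((β * b * xt * (1 - xt) - 1) • (ContinuousLinearMap.fst ℝ ℝ ℝ) +
         (β * (a * xt + c) * (xt * (1 - xt))) • (ContinuousLinearMap.snd ℝ ℝ ℝ))).prod
        ((ε * ((1 + θ) * xt - 1)) • (ContinuousLinearMap.snd ℝ ℝ ℝ)))
      (xt, 0) ∧
    ((∀ μ : ℂ, ((J.map (algebraMap ℝ ℂ)).charpoly).IsRoot μ → μ.re < 0) ↔
      (xt < 1 / (1 + θ) ∧ β * b * xt * (1 - xt) < 1)) :=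
  toc_jacobian_and_stability_general θ ε hθ hε a b c d g hg β hβ T hT F hF xt hxt hfix J hJ
end

section
/- There exists β₁ > 0 such that for all β ≥ β₁: if the equation b·x + d = T_β(x) has solutions in (0, 1/2), then the smallest such solution x₁ satisfies β·b·x₁(1−x₁) < 1 (so the tragedy fixed point (x₁, 0) is locally stable), and there exists β₂ > 0 such that for all β ≥ β₂, if there are two distinct solutions in (0, 1/2), the larger one x₂ satisfies β·b·x₂(1−x₂) > 1 (so (x₂, 0) is unstable). -/
/-!
The solutions are the zeros of `F := β (T_β - (b x + d))`, whose derivative is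
`1 / (x (1 - x)) - β b`. Between two zeros Rolle's theorem yields a critical point `ξ`, i.e.
`β b ξ (1 - ξ) = 1`, and since `x (1 - x)` increases on `(0, 1/2]` the larger zero is unstable.
If the smallest zero `x₁` had `β b x₁ (1 - x₁) ≥ 1`, there would be a critical point `m ≤ x₁`.
There `β b m ∈ (1, 2]`, so `F m > -log (β b) - 2 - β d`, which is positive for large `β` because
`-d > 0`; as `F → -∞` at `0`, `F` would vanish below `m`.
-/

set_option autoImplicit false

open Real Set Filter Topology

/-- `β · (T_β x − (b x + d))`, with the logarithm split so that it is smooth on `(0, 1)`. -/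
noncomputable def tragedyResidual (β b d x : ℝ) : ℝ :=
  log x - log (1 - x) - β * (b * x + d)

section TragedyResidual

variable {β b d x : ℝ}

lemma tragedyResidual_eq_zero_iff (hβ : 0 < β) (hx₀ : 0 < x) (hx₁ : x < 1) :
    tragedyResidual β b d x = 0 ↔ b * x + d = β⁻¹ * log (x / (1 - x)) := by
  rw [tragedyResidual, log_div hx₀.ne' (by linarith), eq_inv_mul_iff_mul_eq₀ hβ.ne']
  constructor <;> intro h <;> linarith

lemma hasDerivAt_tragedyResidual (hx₀ : 0 < x) (hx₁ : x < 1) :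
    HasDerivAt (tragedyResidual β b d) (x⁻¹ + (1 - x)⁻¹ - β * b) x := by
  have hlog₁ : HasDerivAt (fun t => log (1 - t)) (-1 / (1 - x)) x := by
    simpa using ((hasDerivAt_id x).const_sub 1).log (by simp only [id]; linarith)
  have hlin : HasDerivAt (fun t => β * (b * t + d)) (β * b) x := by
    simpa using (((hasDerivAt_id x).const_mul b).add_const d).const_mul β
  exact (((hasDerivAt_log hx₀.ne').sub hlog₁).sub hlin).congr_deriv (by ring)

lemma continuousOn_tragedyResidual : ContinuousOn (tragedyResidual β b d) (Ioo 0 1) :=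
  fun _ hx => (hasDerivAt_tragedyResidual hx.1 hx.2).continuousAt.continuousWithinAt

lemma tendsto_tragedyResidual_nhdsGT_zero :
    Tendsto (tragedyResidual β b d) (𝓝[>] 0) atBot := by
  have hcont : ContinuousAt (fun t : ℝ => -log (1 - t) - β * (b * t + d)) 0 := by
    fun_prop (disch := norm_num)
  have hrest : Tendsto (fun t => -log (1 - t) - β * (b * t + d)) (𝓝[>] 0)
      (𝓝 (-log (1 - 0) - β * (b * 0 + d))) :=
    hcont.tendsto.mono_left nhdsWithin_le_nhds
  convert tendsto_log_nhdsGT_zero.atBot_add hrest using 2 with t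
  simp only [tragedyResidual]
  ring

lemma exists_tragedyResidual_eq_zero_of_pos {m : ℝ} (hm₀ : 0 < m) (hm₁ : m < 1)
    (hFm : 0 < tragedyResidual β b d m) : ∃ r ∈ Ioo 0 m, tragedyResidual β b d r = 0 := by
  obtain ⟨c, hFc, hc⟩ := ((tendsto_tragedyResidual_nhdsGT_zero.eventually_lt_atBot 0).and
    (Ioo_mem_nhdsGT hm₀)).exists
  obtain ⟨r, hr, hFr⟩ := intermediate_value_Ioo hc.2.le
    (continuousOn_tragedyResidual.mono (Icc_subset_Ioo hc.1 hm₁)) ⟨hFc, hFm⟩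
  exact ⟨r, ⟨hc.1.trans hr.1, hr.2⟩, hFr⟩

lemma tragedyResidual_pos_of_critical {m : ℝ} (hm₀ : 0 < m) (hm : m ≤ 1 / 2)
    (hcrit : β * b * m * (1 - m) = 1) (hβd : log (β * b) + 2 ≤ -d * β) :
    0 < tragedyResidual β b d m := by
  have hβb : 0 < β * b := by nlinarith [mul_pos hm₀ (by linarith : 0 < 1 - m)]
  have hlog_m : -log (β * b) < log m := by
    rw [← log_inv, ← one_div]
    exact log_lt_log (by positivity) (by rw [div_lt_iff₀ hβb]; nlinarith)
  have hlog_one_sub : log (1 - m) ≤ 0 := log_nonpos (by linarith) (by linarith)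
  have hβbm : β * b * m ≤ 2 := by nlinarith
  simp only [tragedyResidual]
  nlinarith

lemma mul_mul_one_sub_lt_one_of_first_zero_tragedyResidual
    (hβd : log (β * b) + 2 ≤ -d * β) (hx : x ∈ Ioo 0 (1 / 2))
    (hfirst : ∀ y ∈ Ioo 0 x, tragedyResidual β b d y ≠ 0) :
    β * b * x * (1 - x) < 1 := by
  by_contra! hge
  obtain ⟨m, hm, hcrit⟩ : ∃ m ∈ Icc 0 x, β * b * m * (1 - m) = 1 :=
    intermediate_value_Icc hx.1.le (by fun_prop) ⟨by simp, hge⟩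
  have hm₀ : 0 < m := by
    rcases hm.1.eq_or_lt with rfl | h
    · simp at hcrit
    · exact h
  have hFm := tragedyResidual_pos_of_critical hm₀ (by linarith [hm.2, hx.2]) hcrit hβd
  obtain ⟨r, hr, hFr⟩ := exists_tragedyResidual_eq_zero_of_pos hm₀ (by linarith [hm.2, hx.2]) hFm
  exact hfirst r ⟨hr.1, hr.2.trans_le hm.2⟩ hFr

lemma one_lt_mul_mul_one_sub_of_second_zero_tragedyResidual {y : ℝ} (hy₀ : 0 < y) (hyx : y < x)
    (hx : x ≤ 1 / 2) (hFy : tragedyResidual β b d y = 0) (hFx : tragedyResidual β b d x = 0) :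
    1 < β * b * x * (1 - x) := by
  obtain ⟨ξ, hξ, hF'ξ⟩ := exists_hasDerivAt_eq_zero hyx
    (continuousOn_tragedyResidual.mono (Icc_subset_Ioo hy₀ (by linarith))) (hFy.trans hFx.symm)
    fun t ht => hasDerivAt_tragedyResidual (hy₀.trans ht.1) (by linarith [ht.2])
  have hξ₀ : 0 < ξ := hy₀.trans hξ.1
  have hcrit : β * b * ξ * (1 - ξ) = 1 := by
    field_simp [hξ₀.ne', (by linarith [hξ.2] : 1 - ξ ≠ 0)] at hF'ξ
    linarith
  have hβb : 0 < β * b := by nlinarith [mul_pos hξ₀ (by linarith [hξ.2] : 0 < 1 - ξ)]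
  calc 1 = β * b * ξ * (1 - ξ) := hcrit.symm
    _ < β * b * x * (1 - x) := by
      nlinarith [mul_pos hβb (mul_pos (sub_pos.2 hξ.2) (by linarith [hξ.2] : 0 < 1 - x - ξ))]

end TragedyResidual

lemma eventually_log_mul_add_le_mul {b c : ℝ} (hb : 0 < b) (hc : 0 < c) (a : ℝ) :
    ∀ᶠ β in atTop, log (β * b) + a ≤ c * β := by
  have hlog : ∀ᶠ β in atTop, log β ≤ c / 2 * β := by
    filter_upwards [isLittleO_log_id_atTop.def (half_pos hc), eventually_ge_atTop 0] with β h hβ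
    simpa [abs_of_nonneg hβ] using (le_abs_self _).trans h
  have hconst : ∀ᶠ β in atTop, log b + a ≤ c / 2 * β :=
    (tendsto_id.const_mul_atTop (half_pos hc)).eventually_ge_atTop _
  filter_upwards [hlog, hconst, eventually_gt_atTop 0] with β hlog hconst hβ
  rw [log_mul hβ.ne' hb.ne']
  linarith

theorem toc1_stable_toc2_unstable_general
    (δRT0 δSP0 : ℝ) (hSP0 : δSP0 < 0) (hRT0 : -δSP0 < δRT0)
    (b d : ℝ) (hb : b = δRT0 - δSP0) (hd : d = δSP0)
    (T : ℝ → ℝ → ℝ) (hT : ∀ β x, T β x = β⁻¹ * Real.log (x / (1 - x))) :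
    (∃ β₁ : ℝ, 0 < β₁ ∧ ∀ β : ℝ, β₁ ≤ β →
      ∀ x₁ : ℝ, x₁ ∈ Ioo (0:ℝ) (1/2) → b * x₁ + d = T β x₁ →
        (∀ y ∈ Ioo (0:ℝ) (1/2), b * y + d = T β y → x₁ ≤ y) →
        β * b * x₁ * (1 - x₁) < 1) ∧
    (∃ β₂ : ℝ, 0 < β₂ ∧ ∀ β : ℝ, β₂ ≤ β →
      ∀ x₂ : ℝ, x₂ ∈ Ioo (0:ℝ) (1/2) → b * x₂ + d = T β x₂ →
        (∃ y ∈ Ioo (0:ℝ) (1/2), b * y + d = T β y ∧ y < x₂) →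
        (∀ y ∈ Ioo (0:ℝ) (1/2), b * y + d = T β y → y ≤ x₂) →
        1 < β * b * x₂ * (1 - x₂)) := by
  have hb₀ : 0 < b := by linarith
  have hroot : ∀ β > 0, ∀ x ∈ Ioo (0:ℝ) (1/2),
      b * x + d = T β x ↔ tragedyResidual β b d x = 0 := fun β hβ x hx => by
    rw [hT, tragedyResidual_eq_zero_iff hβ hx.1 (by linarith [hx.2])]
  obtain ⟨β₁, hβ₁⟩ := eventually_atTop.1
    (eventually_log_mul_add_le_mul hb₀ (neg_pos.2 (hd ▸ hSP0)) 2)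
  refine ⟨⟨max β₁ 1, by positivity, fun β hβ x₁ hx₁ _ hmin => ?_⟩,
    ⟨1, one_pos, fun β hβ x₂ hx₂ hsol ⟨y, hy, hysol, hyx⟩ _ => ?_⟩⟩
  · have hβ₀ : 0 < β := one_pos.trans_le (le_of_max_le_right hβ)
    refine mul_mul_one_sub_lt_one_of_first_zero_tragedyResidual
      (hβ₁ β (le_of_max_le_left hβ)) hx₁ fun y hy hFy => ?_
    have hy' : y ∈ Ioo (0:ℝ) (1/2) := ⟨hy.1, hy.2.trans hx₁.2⟩
    exact hy.2.not_ge (hmin y hy' ((hroot β hβ₀ y hy').2 hFy))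
  · have hβ₀ : 0 < β := by linarith
    exact one_lt_mul_mul_one_sub_of_second_zero_tragedyResidual hy.1 hyx hx₂.2.le
      ((hroot β hβ₀ y hy).1 hysol) ((hroot β hβ₀ x₂ hx₂).1 hsol)

/-- There exists β₁ > 0 such that for all β ≥ β₁, the smallest
solution x₁ of b·x + d = T_β(x) in (0, 1/2) (if solutions exist) satisfies
β·b·x₁(1−x₁) < 1 (local stability of (x₁,0)); and there exists β₂ > 0 such
that for all β ≥ β₂, if there are two distinct solutions in (0,1/2), the
larger one x₂ satisfies β·b·x₂(1−x₂) > 1 (instability of (x₂,0)). -/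
theorem toc1_stable_toc2_unstable
    (δRT0 δSP0 θ : ℝ) (hSP0 : δSP0 < 0) (hRT0 : -δSP0 < δRT0)
    (hθ : θ ∈ Ioo (0:ℝ) 1)
    (b d : ℝ) (hb : b = δRT0 - δSP0) (hd : d = δSP0)
    (T : ℝ → ℝ → ℝ) (hT : ∀ β x, T β x = β⁻¹ * Real.log (x / (1 - x))) :
    (∃ β₁ : ℝ, 0 < β₁ ∧ ∀ β : ℝ, β₁ ≤ β →
      ∀ x₁ : ℝ, x₁ ∈ Ioo (0:ℝ) (1/2) → b * x₁ + d = T β x₁ →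
        (∀ y ∈ Ioo (0:ℝ) (1/2), b * y + d = T β y → x₁ ≤ y) →
        β * b * x₁ * (1 - x₁) < 1) ∧
    (∃ β₂ : ℝ, 0 < β₂ ∧ ∀ β : ℝ, β₂ ≤ β →
      ∀ x₂ : ℝ, x₂ ∈ Ioo (0:ℝ) (1/2) → b * x₂ + d = T β x₂ →
        (∃ y ∈ Ioo (0:ℝ) (1/2), b * y + d = T β y ∧ y < x₂) →
        (∀ y ∈ Ioo (0:ℝ) (1/2), b * y + d = T β y → y ≤ x₂) →
        1 < β * b * x₂ * (1 - x₂)) :=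
  toc1_stable_toc2_unstable_general δRT0 δSP0 hSP0 hRT0 b d hb hd T hT
end

section
/- For β > β_int, define the trace of the Jacobian of the logit system at the interior fixed point as tr(β) := β·(a·n_int(β) + b)/(θ·(1+θ^{-1})²) − 1. Then tr(β) < 0 if and only if β < β_h, where β_h := (a·n̄ + b)^{-1}·( θ·(1+θ^{-1})² + (a·(1+θ)/D)·log(1/θ) ). Consequently the interior fixed point's Jacobian has negative trace exactly for β_int < β < β_h. -/
set_option autoImplicit false

open Real Set

/-! Writing `K := δRT0 + θ·δSP0`, one has `n̄ = K/D` and `n_int(β) = n̄ − (1+θ)·log(1/θ)/(β·D)`,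
so `β·(a·n_int(β) + b) = β·(a·n̄ + b) − a·(1+θ)·log(1/θ)/D` is affine in `β` with slope
`a·n̄ + b = (1+θ)(δPS1·δRT0 − δTR1·δSP0)/D > 0`. Hence `tr` is strictly increasing in `β`
and vanishes exactly at `β_h`; the restriction `β > β_int > 0` is what allows cancelling `β·β⁻¹`. -/

lemma add_mul_pos_of_nonpos_of_neg_lt {x y θ : ℝ} (hy : y ≤ 0) (hxy : -y < x) (hθ : θ ≤ 1) :
    0 < x + θ * y := by
  nlinarith

lemma slope_at_nbar_eq {δTR1 δPS1 δRT0 δSP0 θ D : ℝ} (hD : D = δRT0 + θ * δSP0 + δTR1 + θ * δPS1)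
    (hD0 : D ≠ 0) :
    (δSP0 - δRT0 + δPS1 - δTR1) * ((δRT0 + θ * δSP0) / D) + (δRT0 - δSP0)
      = (1 + θ) * (δPS1 * δRT0 - δTR1 * δSP0) / D := by
  field_simp
  rw [hD]
  ring

lemma mul_affine_sub_inv_div {a b c D K : ℝ} (β : ℝ) (hβ : β ≠ 0) :
    β * (a * ((K - β⁻¹ * c) / D) + b) = β * (a * (K / D) + b) - a * c / D := by
  field_simp
  ring

lemma div_sub_one_neg_iff_lt_inv_mul {M C E : ℝ} (β : ℝ) (hM : 0 < M) (hC : 0 < C) :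
    (β * M - E) / C - 1 < 0 ↔ β < M⁻¹ * (C + E) := by
  rw [sub_neg, div_lt_one hC, ← div_eq_inv_mul, lt_div_iff₀ hM]
  constructor <;> intro h <;> linarith

/-- For β > β_int, the trace of the Jacobian at the interior
fixed point, tr(β) = β·(a·n_int(β) + b)/(θ·(1+θ⁻¹)²) − 1, satisfies
tr(β) < 0 ↔ β < β_h; so the trace is negative exactly for β_int < β < β_h. -/
theorem interior_trace_negative_iff
    (δTR1 δPS1 δRT0 δSP0 θ : ℝ)
    (hTR1 : 0 < δTR1) (hPS1 : 0 < δPS1) (hSP0 : δSP0 < 0) (hRT0 : -δSP0 < δRT0)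
    (hθ : θ ∈ Ioo (0:ℝ) 1)
    (a b D nbar βint βh : ℝ)
    (ha : a = δSP0 - δRT0 + δPS1 - δTR1) (hb : b = δRT0 - δSP0)
    (hD : D = δRT0 + θ * δSP0 + δTR1 + θ * δPS1)
    (hnbar : nbar = (δRT0 + θ * δSP0) / D)
    (hβint : βint = (1 + θ) * Real.log (1/θ) / (δRT0 + θ * δSP0))
    (hβh : βh = (a * nbar + b)⁻¹ *
      (θ * (1 + θ⁻¹)^2 + (a * (1 + θ) / D) * Real.log (1/θ)))
    (nint : ℝ → ℝ)
    (hnint : ∀ β : ℝ,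
      nint β = (δRT0 + θ * δSP0 - β⁻¹ * (1 + θ) * Real.log (1/θ)) / D)
    (tr : ℝ → ℝ)
    (htr : ∀ β : ℝ, tr β = β * (a * nint β + b) / (θ * (1 + θ⁻¹)^2) - 1) :
    ∀ β : ℝ, βint < β → (tr β < 0 ↔ β < βh) := by
  intro β hβ
  obtain ⟨hθ0, hθ1⟩ := hθ
  have hK : 0 < δRT0 + θ * δSP0 := add_mul_pos_of_nonpos_of_neg_lt hSP0.le hRT0 hθ1.le
  have hlog : 0 < Real.log (1/θ) := by
    rw [one_div, Real.log_inv, neg_pos]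
    exact Real.log_neg hθ0 hθ1
  have hDpos : 0 < D := by
    rw [hD]
    nlinarith [mul_pos hθ0 hPS1]
  have hslope : 0 < a * nbar + b := by
    rw [ha, hb, hnbar, slope_at_nbar_eq hD hDpos.ne']
    have : 0 < δPS1 * δRT0 - δTR1 * δSP0 := by nlinarith [mul_pos hTR1 (neg_pos.mpr hSP0)]
    positivity
  have hβ0 : β ≠ 0 := by
    have : 0 < βint := by rw [hβint]; positivity
    exact (this.trans hβ).ne'
  have hshift : a * ((1 + θ) * Real.log (1/θ)) / D = a * (1 + θ) / D * Real.log (1/θ) := by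
    ring
  rw [htr, hnint, mul_assoc _ (1 + θ), mul_affine_sub_inv_div β hβ0, ← hnbar, hshift, hβh]
  exact div_sub_one_neg_iff_lt_inv_mul β hslope (by positivity)
end

section
/- Under the standing assumptions, a·x_int + c < 0 where x_int := 1/(1+θ); indeed −(a·x_int + c) = D/(1+θ) > 0. Consequently, for every β > β_int and ε > 0, the determinant of the Jacobian of the logit system at the interior fixed point, det J_int = −ε·β·(a·x_int + c)·n_int(β)·(1−n_int(β))·(1+θ)/(θ·(1+θ^{-1})²), is strictly positive. -/
set_option autoImplicit false

open Real Set

/-!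
At x_int = 1/(1+θ) the slope a·x_int + c collapses to −D/(1+θ), and D is positive because
δ_RT0 + θ·δ_SP0 ≥ δ_RT0 + δ_SP0 > 0 for θ ≤ 1 and δ_SP0 < 0. The threshold β_int is exactly
the value of β above which the numerator of n_int(β) is positive; since D exceeds that numerator
by δ_TR1 + θ·δ_PS1 > 0, we get n_int(β) ∈ (0,1), and det J_int is a product of positive factors.
-/

lemma add_mul_pos_of_add_pos {x y θ : ℝ} (hxy : 0 < x + y) (hy : y < 0) (hθ : θ ≤ 1) :
    0 < x + θ * y := by
  nlinarith

lemma slope_at_interior_eq {δTR1 δPS1 δRT0 δSP0 θ : ℝ} (hθ : 0 < 1 + θ) :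
    (δSP0 - δRT0 + δPS1 - δTR1) * (1 / (1 + θ)) + -(δPS1 + δSP0) =
      -((δRT0 + θ * δSP0 + δTR1 + θ * δPS1) / (1 + θ)) := by
  field_simp
  ring

lemma sub_inv_mul_pos_of_div_lt {A L β : ℝ} (hA : 0 < A) (hL : 0 < L) (hβ : L / A < β) :
    0 < A - β⁻¹ * L := by
  have hβ0 : 0 < β := (div_pos hL hA).trans hβ
  rw [sub_pos, inv_mul_lt_iff₀ hβ0]
  exact (div_lt_iff₀ hA).1 hβ

lemma sub_div_add_mem_Ioo {A t E : ℝ} (ht : 0 < t) (hE : 0 < E) (h : 0 < A - t) :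
    (A - t) / (A + E) ∈ Ioo 0 1 :=
  ⟨div_pos h (by linarith), (div_lt_one (by linarith)).2 (by linarith)⟩

theorem interior_det_positive_general
    (δTR1 δPS1 δRT0 δSP0 θ ε : ℝ)
    (hTR1 : 0 < δTR1) (hPS1 : 0 < δPS1) (hSP0 : δSP0 < 0) (hRT0 : -δSP0 < δRT0)
    (hθ : θ ∈ Ioo (0:ℝ) 1) (hε : 0 < ε)
    (a c D βint xint : ℝ)
    (ha : a = δSP0 - δRT0 + δPS1 - δTR1)
    (hc : c = -(δPS1 + δSP0))
    (hD : D = δRT0 + θ * δSP0 + δTR1 + θ * δPS1)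
    (hβint : βint = (1 + θ) * Real.log (1/θ) / (δRT0 + θ * δSP0))
    (hxint : xint = 1 / (1 + θ))
    (nint : ℝ → ℝ)
    (hnint : ∀ β : ℝ,
      nint β = (δRT0 + θ * δSP0 - β⁻¹ * (1 + θ) * Real.log (1/θ)) / D) :
    a * xint + c < 0 ∧ -(a * xint + c) = D / (1 + θ) ∧ 0 < D / (1 + θ) ∧
    ∀ β : ℝ, βint < β →
      0 < -ε * β * (a * xint + c) * nint β * (1 - nint β) * (1 + θ) /
          (θ * (1 + θ⁻¹)^2) := by
  obtain ⟨hθ0, hθ1⟩ := hθ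
  have hA : 0 < δRT0 + θ * δSP0 := add_mul_pos_of_add_pos (by linarith) hSP0 hθ1.le
  have hL : 0 < (1 + θ) * Real.log (1/θ) :=
    mul_pos (by linarith) (Real.log_pos (one_lt_one_div hθ0 hθ1))
  have hslope : a * xint + c = -(D / (1 + θ)) := by
    rw [ha, hc, hxint, hD]
    exact slope_at_interior_eq (by linarith)
  have hDpos : 0 < D / (1 + θ) := div_pos (by rw [hD]; nlinarith) (by linarith)
  refine ⟨by linarith, by rw [hslope, neg_neg], hDpos, fun β hβ => ?_⟩
  have hβ0 : 0 < β := (div_pos hL hA).trans (hβint ▸ hβ)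
  obtain ⟨hn0, hn1⟩ : nint β ∈ Ioo 0 1 := by
    rw [hnint, hD, mul_assoc, add_assoc]
    exact sub_div_add_mem_Ioo (mul_pos (inv_pos.2 hβ0) hL) (by positivity)
      (sub_inv_mul_pos_of_div_lt hA hL (hβint ▸ hβ))
  have hn1' : 0 < 1 - nint β := sub_pos.2 hn1
  rw [show -ε * β * (a * xint + c) = ε * β * (D / (1 + θ)) by rw [hslope]; ring]
  positivity

/-- a·x_int + c < 0 with −(a·x_int + c) = D/(1+θ) > 0, and for
every β > β_int the determinant of the Jacobian at the interior fixed point,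
det J_int = −ε·β·(a·x_int + c)·n_int(β)·(1−n_int(β))·(1+θ)/(θ·(1+θ⁻¹)²),
is strictly positive. -/
theorem interior_det_positive
    (δTR1 δPS1 δRT0 δSP0 θ ε : ℝ)
    (hTR1 : 0 < δTR1) (hPS1 : 0 < δPS1) (hSP0 : δSP0 < 0) (hRT0 : -δSP0 < δRT0)
    (hθ : θ ∈ Ioo (0:ℝ) 1) (hε : 0 < ε)
    (a b c d D βint xint : ℝ)
    (ha : a = δSP0 - δRT0 + δPS1 - δTR1) (hb : b = δRT0 - δSP0)
    (hc : c = -(δPS1 + δSP0)) (hd : d = δSP0)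
    (hD : D = δRT0 + θ * δSP0 + δTR1 + θ * δPS1)
    (hβint : βint = (1 + θ) * Real.log (1/θ) / (δRT0 + θ * δSP0))
    (hxint : xint = 1 / (1 + θ))
    (nint : ℝ → ℝ)
    (hnint : ∀ β : ℝ,
      nint β = (δRT0 + θ * δSP0 - β⁻¹ * (1 + θ) * Real.log (1/θ)) / D) :
    a * xint + c < 0 ∧ -(a * xint + c) = D / (1 + θ) ∧ 0 < D / (1 + θ) ∧
    ∀ β : ℝ, βint < β →
      0 < -ε * β * (a * xint + c) * nint β * (1 - nint β) * (1 + θ) /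
          (θ * (1 + θ⁻¹)^2) :=
  interior_det_positive_general δTR1 δPS1 δRT0 δSP0 θ ε hTR1 hPS1 hSP0 hRT0 hθ hε a c D βint xint ha
    hc hD hβint hxint nint hnint
end

section
/- Under the standing assumptions, the identity a·n̄ + b = (1+θ)·(δ_RT0·δ_PS1 − δ_SP0·δ_TR1)/D holds, and this quantity is strictly positive. -/
set_option autoImplicit false

open Real Set

/-- Clearing the denominator `D` of `n̄` turns the identity into a polynomial one. -/
lemma sub_mul_add_sub_mul_eq (δTR1 δPS1 δRT0 δSP0 θ : ℝ) :
    (δSP0 - δRT0 + δPS1 - δTR1) * (δRT0 + θ * δSP0)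
      + (δRT0 - δSP0) * (δRT0 + θ * δSP0 + δTR1 + θ * δPS1)
      = (1 + θ) * (δRT0 * δPS1 - δSP0 * δTR1) := by
  ring

section

variable {δTR1 δPS1 δRT0 δSP0 θ : ℝ}

lemma nbar_denom_pos (hTR1 : 0 < δTR1) (hPS1 : 0 ≤ δPS1) (hSP0 : δSP0 ≤ 0)
    (hRT0 : -δSP0 < δRT0) (hθ0 : 0 ≤ θ) (hθ1 : θ ≤ 1) :
    0 < δRT0 + θ * δSP0 + δTR1 + θ * δPS1 := by
  have hθSP0 : δSP0 ≤ θ * δSP0 := by nlinarith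
  have hθPS1 : 0 ≤ θ * δPS1 := mul_nonneg hθ0 hPS1
  linarith

lemma cross_sub_pos (hTR1 : 0 ≤ δTR1) (hPS1 : 0 < δPS1) (hSP0 : δSP0 ≤ 0)
    (hRT0 : -δSP0 < δRT0) :
    0 < δRT0 * δPS1 - δSP0 * δTR1 := by
  have hRT0PS1 : 0 < δRT0 * δPS1 := mul_pos (by linarith) hPS1
  have hSP0TR1 : δSP0 * δTR1 ≤ 0 := mul_nonpos_of_nonpos_of_nonneg hSP0 hTR1
  linarith

end

/-- The identity a·n̄ + b = (1+θ)·(δ_RT0·δ_PS1 − δ_SP0·δ_TR1)/D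
holds, and this quantity is strictly positive. -/
theorem anbar_plus_b_identity
    (δTR1 δPS1 δRT0 δSP0 θ : ℝ)
    (hTR1 : 0 < δTR1) (hPS1 : 0 < δPS1) (hSP0 : δSP0 < 0) (hRT0 : -δSP0 < δRT0)
    (hθ : θ ∈ Ioo (0:ℝ) 1)
    (a b D nbar : ℝ)
    (ha : a = δSP0 - δRT0 + δPS1 - δTR1) (hb : b = δRT0 - δSP0)
    (hD : D = δRT0 + θ * δSP0 + δTR1 + θ * δPS1)
    (hnbar : nbar = (δRT0 + θ * δSP0) / D) :
    a * nbar + b = (1 + θ) * (δRT0 * δPS1 - δSP0 * δTR1) / D ∧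
    0 < a * nbar + b := by
  obtain ⟨hθ0, hθ1⟩ := hθ
  have hD0 : 0 < D :=
    hD ▸ nbar_denom_pos hTR1 hPS1.le hSP0.le hRT0 hθ0.le hθ1.le
  have hid : a * nbar + b = (1 + θ) * (δRT0 * δPS1 - δSP0 * δTR1) / D := by
    rw [hnbar, mul_div_assoc', div_add' _ _ _ hD0.ne', ha, hb, hD,
      sub_mul_add_sub_mul_eq]
  refine ⟨hid, hid ▸ ?_⟩
  have hcross := cross_sub_pos hTR1.le hPS1 hSP0.le hRT0
  positivity
end

section
/- Suppose β_h > β_int, where β_h := (a·n̄ + b)^{-1}·( θ·(1+θ^{-1})² + (a·(1+θ)/D)·log(1/θ) ). Then at β = β_h the Jacobian J_int of the logit system at the interior fixed point (1/(1+θ), n_int(β_h)) has trace zero and determinant ω² > 0; hence its characteristic polynomial is λ² + ω² and its complex eigenvalues are the purely imaginary conjugate pair ± i·ω with ω = √(det J_int) > 0. -/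
set_option autoImplicit false

open Real Set Polynomial

/-!
The interior fixed point sits at `x = 1/(1+θ)`, where the logistic derivative `σ(1-σ)` equals
`1/(θ(1+θ⁻¹)²)`; hence `tr J = β(a n + b)/(θ(1+θ⁻¹)²) - 1`, and the choice of `β_h` is exactly
the one making `β_h (a n_int(β_h) + b) = θ(1+θ⁻¹)²`, i.e. the trace vanishes. The off-diagonal
entry `β(a/(1+θ) + c)/(θ(1+θ⁻¹)²)` equals `-βD/((1+θ)θ(1+θ⁻¹)²) < 0`, while `β_h > β_int` puts
`n_int(β_h)` strictly inside `(0, 1)`, so the lower-left entry is positive and `det J > 0`.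
A real `2 × 2` matrix with zero trace and determinant `ω²` has characteristic polynomial
`λ² + ω²`, with roots `± iω`.
-/

lemma Matrix.charpoly_map_of_trace_eq_zero {R S : Type*} [CommRing R] [CommRing S] [Nontrivial S]
    (f : R →+* S) {M : Matrix (Fin 2) (Fin 2) R} (hM : M.trace = 0) :
    (M.map f).charpoly = X ^ 2 + C (f M.det) := by
  have : Nontrivial R := f.domain_nontrivial
  rw [Matrix.charpoly_map, Matrix.charpoly_fin_two, hM]
  simp

lemma isRoot_X_sq_add_C_sq_iff (ω μ : ℂ) :
    (X ^ 2 + C (ω ^ 2)).IsRoot μ ↔ μ = Complex.I * ω ∨ μ = -(Complex.I * ω) := by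
  have hfactor : μ ^ 2 + ω ^ 2 = (μ - Complex.I * ω) * (μ + Complex.I * ω) := by
    linear_combination ω ^ 2 * Complex.I_sq
  simp only [IsRoot, eval_add, eval_pow, eval_X, eval_C, hfactor, mul_eq_zero, sub_eq_zero,
    add_eq_zero_iff_eq_neg]

lemma add_mul_pos_of_neg_of_lt {p q θ : ℝ} (hq : q < 0) (hpq : -q < p) (hθ : θ ≤ 1) :
    0 < p + θ * q := by
  nlinarith

lemma sub_inv_mul_div_mem_Ioo {P Q D β : ℝ} (hP : 0 < P) (hQ : 0 < Q) (hPD : P < D)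
    (hβ : Q / P < β) : (P - β⁻¹ * Q) / D ∈ Ioo 0 1 := by
  have hβ0 : 0 < β := (div_pos hQ hP).trans hβ
  have hβQ : β⁻¹ * Q < P := (inv_mul_lt_iff₀ hβ0).2 ((div_lt_iff₀ hP).1 hβ)
  have hQβ : 0 < β⁻¹ * Q := by positivity
  have hD : 0 < D := hP.trans hPD
  exact ⟨div_pos (by linarith) hD, (div_lt_one hD).2 (by linarith)⟩

lemma mul_slope_shift_eq {a b P D K s L β : ℝ} (hD : D ≠ 0) (hβ0 : β ≠ 0)
    (hβ : β = (a * (P / D) + b)⁻¹ * (K + a * s / D * L)) :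
    β * (a * ((P - β⁻¹ * s * L) / D) + b) = K := by
  have hslope : a * (P / D) + b ≠ 0 := by
    intro h
    rw [h, inv_zero, zero_mul] at hβ
    exact hβ0 hβ
  have hβslope : β * (a * (P / D) + b) = K + a * s / D * L := by
    rw [hβ, mul_comm, ← mul_assoc, mul_inv_cancel₀ hslope, one_mul]
  calc β * (a * ((P - β⁻¹ * s * L) / D) + b)
      = β * (a * (P / D) + b) - a * s / D * L := by field_simp; ring
    _ = K := by rw [hβslope]; ring

lemma logit_cross_coeff {δTR1 δPS1 δRT0 δSP0 θ a c D : ℝ} (hθ : 1 + θ ≠ 0)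
    (ha : a = δSP0 - δRT0 + δPS1 - δTR1) (hc : c = -(δPS1 + δSP0))
    (hD : D = δRT0 + θ * δSP0 + δTR1 + θ * δPS1) :
    a / (1 + θ) + c = -D / (1 + θ) := by
  subst ha hc hD
  field_simp
  ring

theorem hopf_purely_imaginary_eigenvalues_general
    (δTR1 δPS1 δRT0 δSP0 θ ε : ℝ)
    (hTR1 : 0 < δTR1) (hPS1 : 0 < δPS1) (hSP0 : δSP0 < 0) (hRT0 : -δSP0 < δRT0)
    (hθ : θ ∈ Ioo (0:ℝ) 1) (hε : 0 < ε)
    (a b c D nbar βint βh : ℝ)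
    (ha : a = δSP0 - δRT0 + δPS1 - δTR1)
    (hc : c = -(δPS1 + δSP0))
    (hD : D = δRT0 + θ * δSP0 + δTR1 + θ * δPS1)
    (hnbar : nbar = (δRT0 + θ * δSP0) / D)
    (hβint : βint = (1 + θ) * Real.log (1/θ) / (δRT0 + θ * δSP0))
    (hβh : βh = (a * nbar + b)⁻¹ *
      (θ * (1 + θ⁻¹)^2 + (a * (1 + θ) / D) * Real.log (1/θ)))
    (hgap : βint < βh)
    (nh : ℝ)
    (hnh : nh = (δRT0 + θ * δSP0 - βh⁻¹ * (1 + θ) * Real.log (1/θ)) / D)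
    (J : Matrix (Fin 2) (Fin 2) ℝ)
    (hJ : J = !![βh * (a * nh + b) / (θ * (1 + θ⁻¹)^2) - 1,
                 βh * (a / (1 + θ) + c) / (θ * (1 + θ⁻¹)^2);
                 ε * nh * (1 - nh) * (1 + θ), 0])
    (ω : ℝ) (hω : ω = Real.sqrt J.det) :
    J.trace = 0 ∧ 0 < J.det ∧ J.det = ω^2 ∧ 0 < ω ∧
    (J.map (algebraMap ℝ ℂ)).charpoly = X^2 + C ((ω:ℂ)^2) ∧
    (∀ μ : ℂ, ((J.map (algebraMap ℝ ℂ)).charpoly).IsRoot μ ↔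
      (μ = Complex.I * ω ∨ μ = -(Complex.I * ω))) := by
  obtain ⟨hθ0, hθ1⟩ := hθ
  have hP : 0 < δRT0 + θ * δSP0 := add_mul_pos_of_neg_of_lt hSP0 hRT0 hθ1.le
  have hPD : δRT0 + θ * δSP0 < D := by rw [hD]; nlinarith
  have hL : 0 < Real.log (1/θ) := Real.log_pos (one_lt_one_div hθ0 hθ1)
  have hβh0 : 0 < βh := (hβint ▸ div_pos (by positivity) hP).trans hgap
  obtain ⟨hnh0, hnh1⟩ : nh ∈ Ioo 0 1 := by
    rw [hnh, mul_assoc]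
    exact sub_inv_mul_div_mem_Ioo hP (by positivity) hPD (hβint ▸ hgap)
  have hhopf : βh * (a * nh + b) = θ * (1 + θ⁻¹)^2 :=
    hnh ▸ mul_slope_shift_eq (hP.trans hPD).ne' hβh0.ne' (hnbar ▸ hβh)
  have htr : J.trace = 0 := by
    rw [hJ, Matrix.trace_fin_two_of, hhopf, div_self (by positivity)]
    ring
  have hdet : 0 < J.det := by
    rw [hJ, Matrix.det_fin_two_of, logit_cross_coeff (by positivity) ha hc hD]
    have hoff : 0 < βh * (D / (1 + θ)) / (θ * (1 + θ⁻¹)^2) := by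
      have := hP.trans hPD
      positivity
    have hshare : 0 < ε * nh * (1 - nh) * (1 + θ) := by
      have := sub_pos.2 hnh1
      positivity
    linear_combination mul_pos hoff hshare
  have hdetω : J.det = ω ^ 2 := by rw [hω, sq_sqrt hdet.le]
  have hcp : (J.map (algebraMap ℝ ℂ)).charpoly = X^2 + C ((ω:ℂ)^2) := by
    rw [Matrix.charpoly_map_of_trace_eq_zero _ htr, hdetω, map_pow, Complex.coe_algebraMap]
  refine ⟨htr, hdet, hdetω, hω ▸ sqrt_pos.2 hdet, hcp, fun μ => ?_⟩
  rw [hcp]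
  exact isRoot_X_sq_add_C_sq_iff ω μ

/-- If β_h > β_int then at β = β_h the Jacobian J_int of the
logit system at the interior fixed point has trace zero and determinant
ω² > 0 with ω = √(det J_int) > 0; its characteristic polynomial is λ² + ω²
and its complex eigenvalues are the purely imaginary pair ± i·ω. -/
theorem hopf_purely_imaginary_eigenvalues
    (δTR1 δPS1 δRT0 δSP0 θ ε : ℝ)
    (hTR1 : 0 < δTR1) (hPS1 : 0 < δPS1) (hSP0 : δSP0 < 0) (hRT0 : -δSP0 < δRT0)
    (hθ : θ ∈ Ioo (0:ℝ) 1) (hε : 0 < ε)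
    (a b c d D nbar βint βh : ℝ)
    (ha : a = δSP0 - δRT0 + δPS1 - δTR1) (hb : b = δRT0 - δSP0)
    (hc : c = -(δPS1 + δSP0)) (hd : d = δSP0)
    (hD : D = δRT0 + θ * δSP0 + δTR1 + θ * δPS1)
    (hnbar : nbar = (δRT0 + θ * δSP0) / D)
    (hβint : βint = (1 + θ) * Real.log (1/θ) / (δRT0 + θ * δSP0))
    (hβh : βh = (a * nbar + b)⁻¹ *
      (θ * (1 + θ⁻¹)^2 + (a * (1 + θ) / D) * Real.log (1/θ)))
    (hgap : βint < βh)
    (nh : ℝ)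
    (hnh : nh = (δRT0 + θ * δSP0 - βh⁻¹ * (1 + θ) * Real.log (1/θ)) / D)
    (J : Matrix (Fin 2) (Fin 2) ℝ)
    (hJ : J = !![βh * (a * nh + b) / (θ * (1 + θ⁻¹)^2) - 1,
                 βh * (a / (1 + θ) + c) / (θ * (1 + θ⁻¹)^2);
                 ε * nh * (1 - nh) * (1 + θ), 0])
    (ω : ℝ) (hω : ω = Real.sqrt J.det) :
    J.trace = 0 ∧ 0 < J.det ∧ J.det = ω^2 ∧ 0 < ω ∧
    (J.map (algebraMap ℝ ℂ)).charpoly = X^2 + C ((ω:ℂ)^2) ∧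
    (∀ μ : ℂ, ((J.map (algebraMap ℝ ℂ)).charpoly).IsRoot μ ↔
      (μ = Complex.I * ω ∨ μ = -(Complex.I * ω))) :=
  hopf_purely_imaginary_eigenvalues_general δTR1 δPS1 δRT0 δSP0 θ ε hTR1 hPS1 hSP0 hRT0 hθ hε a b c
    D nbar βint βh ha hc hD hnbar hβint hβh hgap nh hnh J hJ ω hω
end
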